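/- arXiv:1605.06361 — 8 statements merged into one kernel-verified Lean document; each statement's English description precedes it below -/
import Mathlib

section
/- Let r ≥ 2 and let T be an r-partite r-uniform intersecting hypergraph with sides V_1,…,V_r. Suppose there is an edge S ∈ T such that: S intersects every other edge of T in exactly one vertex; the hypergraph T − S has cover number τ(T − S) = r−1; and the only covers of T − S of cardinality r−1 are the sides V_1,…,V_r. Then there exists an (r+1)-partite (r+1)-uniform intersecting hypergraph H with cover number τ(H) = r. -/
open Finset

noncomputable section
open scoped Classical

/-- A set of vertices `C` covers the hypergraph `H` if it meets every edge. -/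
def IsCover {V : Type*} (C : Set V) (H : Set (Finset V)) : Prop :=
  ∀ e ∈ H, ∃ v ∈ C, v ∈ e

/-- The cover number `τ(H)`: the minimum cardinality of a cover of `H`. -/
noncomputable def coverNumber {V : Type*} (H : Set (Finset V)) : ℕ :=
  sInf {n | ∃ C : Finset V, IsCover (↑C) H ∧ C.card = n}

/-- The matching number `ν(H)`: the maximum size of a set of pairwise disjoint edges. -/
noncomputable def matchingNumber {V : Type*} (H : Set (Finset V)) : ℕ :=
  sSup {n | ∃ M : Finset (Finset V), ↑M ⊆ H ∧
    (M : Set (Finset V)).Pairwise (fun e₁ e₂ => Disjoint e₁ e₂) ∧ M.card = n}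

/-- A hypergraph is intersecting if any two edges share a vertex. -/
def Intersecting {V : Type*} (H : Set (Finset V)) : Prop :=
  ∀ e₁ ∈ H, ∀ e₂ ∈ H, ∃ v, v ∈ e₁ ∧ v ∈ e₂

/-- A hypergraph is `r`-uniform if every edge has exactly `r` vertices. -/
def Uniform {V : Type*} (H : Set (Finset V)) (r : ℕ) : Prop :=
  ∀ e ∈ H, e.card = r

/-- `H` is `r`-partite with the given sides: the sides partition the vertex set and
every edge has at most one vertex in each side. -/
def Partite {V : Type*} {r : ℕ} (H : Set (Finset V)) (sides : Fin r → Set V) : Prop :=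
  (∀ v : V, ∃! i, v ∈ sides i) ∧
  ∀ e ∈ H, ∀ i : Fin r, ∀ x ∈ e, ∀ y ∈ e, x ∈ sides i → y ∈ sides i → x = y

/-- Two hypergraphs are isomorphic if a bijection of the vertex sets carries the
edge set of one onto the edge set of the other. -/
def Isomorphic {V W : Type*} (H₁ : Set (Finset V)) (H₂ : Set (Finset W)) : Prop :=
  ∃ φ : V ≃ W, ∀ e : Finset V, e ∈ H₁ ↔ e.image φ ∈ H₂

/-- The edge `Ê = E ∪ {v_i}`, where the new vertex `v_i` is encoded as `Sum.inr i`. -/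
def hatE {V : Type*} {r : ℕ} (E : Finset V) (i : Fin r) : Finset (V ⊕ Fin r) :=
  insert (Sum.inr i) (E.image Sum.inl)

/-- The construction `H(T, S, F_1, …, F_r)`, with new vertices `v_i = Sum.inr i`. -/
def constructionH {V : Type*} {r : ℕ} (T : Set (Finset V)) (S : Finset V)
    (s : Fin r → V) (F : Fin r → Finset V) : Set (Finset (V ⊕ Fin r)) :=
  {Eh | ∃ E ∈ T, E ≠ S ∧ ∃ i : Fin r, s i ∈ E ∧ Eh = hatE E i} ∪
  {Eh | ∃ i : Fin r, Eh = (F i).image Sum.inl} ∪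
  {Eh | ∃ i : Fin r, Eh = hatE ((F i).erase (s i)) i}

/-- The hypergraph `S(T, S, F_1, …, F_r) = E2 ∪ E3`. -/
def constructionS {V : Type*} {r : ℕ}
    (s : Fin r → V) (F : Fin r → Finset V) : Set (Finset (V ⊕ Fin r)) :=
  {Eh | ∃ i : Fin r, Eh = (F i).image Sum.inl} ∪
  {Eh | ∃ i : Fin r, Eh = hatE ((F i).erase (s i)) i}

/-- The sides of the construction: the old sides (lifted), plus the new side `{v_1, …, v_r}`. -/
def extSides {V : Type*} {r : ℕ} (sides : Fin r → Set V) : Fin (r + 1) → Set (V ⊕ Fin r) :=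
  Fin.lastCases (Set.range Sum.inr) (fun i => Sum.inl '' sides i)

open Configuration

/-- The points of the line `ℓ` other than `w`, as a finset of the vertex type `{p // p ≠ w}`. -/
noncomputable def linePoints {P L : Type*} [Membership P L] [Fintype P] (w : P) (ℓ : L) :
    Finset {p : P // p ≠ w} :=
  Finset.univ.filter (fun p : {p : P // p ≠ w} => (p : P) ∈ ℓ)

/-- The truncated projective plane at the point `w`: the edges are the point sets of
the lines not passing through `w`, on the vertex set of points other than `w`. -/
noncomputable def truncatedPP (P : Type*) (L : Type*) [Membership P L] [Fintype P] (w : P) :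
    Set (Finset {p : P // p ≠ w}) :=
  {E | ∃ ℓ : L, w ∉ ℓ ∧ E = linePoints w ℓ}

/-- The sides of the truncated projective plane, given an enumeration `m` of
the lines through `w`. -/
def ppSide {P L : Type*} [Membership P L] {r : ℕ} (w : P) (m : Fin r → L) (i : Fin r) :
    Set {p : P // p ≠ w} :=
  {p : {p : P // p ≠ w} | (p : P) ∈ m i}

/-- `m` enumerates the lines through `w`. -/
def EnumeratesLinesThrough {P L : Type*} [Membership P L] {r : ℕ} (w : P) (m : Fin r → L) : Prop :=
  Function.Injective m ∧ (∀ i, w ∈ m i) ∧ ∀ ℓ : L, w ∈ ℓ → ∃ i, m i = ℓ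

universe u

/-- new vertex `v_i` -/
def aNv {V : Type u} {r : ℕ} (i : Fin r) : V ⊕ (Fin r ⊕ Fin r) := Sum.inr (Sum.inl i)
/-- fresh vertex `u_j` -/
def aNu {V : Type u} {r : ℕ} (j : Fin r) : V ⊕ (Fin r ⊕ Fin r) := Sum.inr (Sum.inr j)

def aHat {V : Type u} {r : ℕ} (E : Finset V) (i : Fin r) : Finset (V ⊕ (Fin r ⊕ Fin r)) :=
  insert (aNv i) (E.image Sum.inl)

def aSk {V : Type u} {r : ℕ} (S : Finset V) (k : Fin r) : Finset (V ⊕ (Fin r ⊕ Fin r)) :=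
  insert (aNv k) (S.image Sum.inl)

def aD {V : Type u} {r : ℕ} (S : Finset V) (s : Fin r → V) (j : Fin r) :
    Finset (V ⊕ (Fin r ⊕ Fin r)) :=
  insert (aNv j) (insert (aNu j) ((S.erase (s j)).image Sum.inl))

def aH {V : Type u} {r : ℕ} (T : Set (Finset V)) (S : Finset V) (s : Fin r → V) :
    Set (Finset (V ⊕ (Fin r ⊕ Fin r))) :=
  {X | (∃ E ∈ T, E ≠ S ∧ ∃ i, s i ∈ E ∧ X = aHat E i) ∨
       (∃ k, X = aSk S k) ∨ (∃ j, X = aD S s j)}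

def aSideOf {V : Type u} {r : ℕ} (σ : V → Fin r) : V ⊕ (Fin r ⊕ Fin r) → Fin (r + 1) :=
  fun w => match w with
  | Sum.inl x => Fin.castSucc (σ x)
  | Sum.inr (Sum.inl _) => Fin.last r
  | Sum.inr (Sum.inr j) => Fin.castSucc j

lemma main_case {V : Type u} {r : ℕ} (hr3 : 3 ≤ r)
    (T : Set (Finset V)) (sides : Fin r → Set V)
    (hTint : Intersecting T) (hTuni : Uniform T r) (hTpart : Partite T sides)
    (S : Finset V) (hS : S ∈ T)
    (hSint : ∀ E ∈ T, E ≠ S → ∃! x, x ∈ E ∧ x ∈ S)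
    (hτ : coverNumber (T \ {S}) = r - 1)
    (hcovers : ∀ C : Finset V, IsCover (↑C) (T \ {S}) → C.card = r - 1 →
      ∃ i, (C : Set V) = sides i) :
    ∃ (W : Type u) (H : Set (Finset W)) (sides' : Fin (r + 1) → Set W),
      Partite H sides' ∧ Uniform H (r + 1) ∧ Intersecting H ∧ coverNumber H = r := by
  classical
  choose σ hσ hσu using fun x => hTpart.1 x
  have hScard : S.card = r := hTuni S hS
  have hSpart : ∀ x ∈ S, ∀ y ∈ S, σ x = σ y → x = y := by
    intro x hx y hy hxy
    exact hTpart.2 S hS (σ x) x hx y hy (hσ x) (by rw [hxy]; exact hσ y)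
  have hsurj : ∀ i : Fin r, ∃ x, x ∈ S ∧ σ x = i := by
    intro i
    have himg : S.image σ = Finset.univ := by
      apply Finset.eq_univ_of_card
      rw [Finset.card_image_of_injOn (fun x hx y hy h => hSpart x hx y hy h), hScard,
        Fintype.card_fin]
    have : i ∈ S.image σ := himg ▸ Finset.mem_univ i
    simpa using this
  choose s hsS hsσ using hsurj
  have hs_inj : Function.Injective s := by
    intro i j h
    rw [← hsσ i, ← hsσ j, h]
  have hs_uniq : ∀ x ∈ S, x = s (σ x) := fun x hx =>
    hSpart x hx (s (σ x)) (hsS _) (by rw [hsσ])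
  have hclass : ∀ E ∈ T, E ≠ S → ∃ i, s i ∈ E := by
    intro E hE hne
    obtain ⟨x, ⟨hxE, hxS⟩, -⟩ := hSint E hE hne
    exact ⟨σ x, by rw [← hs_uniq x hxS]; exact hxE⟩
  have hpick1 : ∀ j : Fin r, ∃ k, k ≠ j := by
    intro j
    have h1 : (Finset.univ \ {j} : Finset (Fin r)).Nonempty := by
      apply Finset.card_pos.mp
      rw [Finset.card_sdiff_of_subset (Finset.subset_univ _)]
      simp only [Finset.card_singleton, Finset.card_univ, Fintype.card_fin]
      omega
    obtain ⟨k, hk⟩ := h1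
    simp only [Finset.mem_sdiff, Finset.mem_singleton] at hk
    exact ⟨k, hk.2⟩
  have hpick2 : ∀ j j' : Fin r, ∃ l, l ≠ j ∧ l ≠ j' := by
    intro j j'
    have h1 : (Finset.univ \ {j, j'} : Finset (Fin r)).Nonempty := by
      apply Finset.card_pos.mp
      rw [Finset.card_sdiff_of_subset (Finset.subset_univ _)]
      have h2 : ({j, j'} : Finset (Fin r)).card ≤ 2 :=
        (Finset.card_insert_le _ _).trans (by simp)
      simp only [Finset.card_univ, Fintype.card_fin]
      omega
    obtain ⟨l, hl⟩ := h1
    simp only [Finset.mem_sdiff, Finset.mem_insert, Finset.mem_singleton, not_or] at hl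
    exact ⟨l, hl.2.1, hl.2.2⟩
  have hnv_inj : Function.Injective (aNv : Fin r → V ⊕ (Fin r ⊕ Fin r)) := by
    intro a b h; simpa [aNv] using h
  have hnu_inj : Function.Injective (aNu : Fin r → V ⊕ (Fin r ⊕ Fin r)) := by
    intro a b h; simpa [aNu] using h
  refine ⟨V ⊕ (Fin r ⊕ Fin r), aH T S s, fun i => {w | aSideOf σ w = i},
    ⟨?_, ?_⟩, ?_, ?_, ?_⟩
  · -- partition
    intro w
    exact ⟨aSideOf σ w, rfl, fun y hy => hy.symm⟩
  · -- at most one vertex per side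
    rintro e (⟨E, hE, hne, i₀, hsiE, rfl⟩ | ⟨k, rfl⟩ | ⟨j, rfl⟩) i x hx y hy hxi hyi
    · simp only [aHat, Finset.mem_insert, Finset.mem_image] at hx hy
      have hxi' : aSideOf σ x = i := hxi
      have hyi' : aSideOf σ y = i := hyi
      rcases hx with rfl | ⟨a, haE, rfl⟩ <;> rcases hy with rfl | ⟨b, hbE, rfl⟩
      · rfl
      · exfalso
        have := congrArg Fin.val (hxi'.trans hyi'.symm)
        simp only [aSideOf, aNv, Fin.val_last, Fin.coe_castSucc] at this
        have := (σ b).isLt; omega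
      · exfalso
        have := congrArg Fin.val (hxi'.trans hyi'.symm)
        simp only [aSideOf, aNv, Fin.val_last, Fin.coe_castSucc] at this
        have := (σ a).isLt; omega
      · have hab : σ a = σ b := by
          have := congrArg Fin.val (hxi'.trans hyi'.symm)
          simp only [aSideOf, Fin.coe_castSucc] at this
          exact Fin.ext this
        exact congrArg Sum.inl
          (hTpart.2 E hE (σ a) a haE b hbE (hσ a) (by rw [hab]; exact hσ b))
    · simp only [aSk, Finset.mem_insert, Finset.mem_image] at hx hy
      have hxi' : aSideOf σ x = i := hxi
      have hyi' : aSideOf σ y = i := hyi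
      rcases hx with rfl | ⟨a, haS, rfl⟩ <;> rcases hy with rfl | ⟨b, hbS, rfl⟩
      · rfl
      · exfalso
        have := congrArg Fin.val (hxi'.trans hyi'.symm)
        simp only [aSideOf, aNv, Fin.val_last, Fin.coe_castSucc] at this
        have := (σ b).isLt; omega
      · exfalso
        have := congrArg Fin.val (hxi'.trans hyi'.symm)
        simp only [aSideOf, aNv, Fin.val_last, Fin.coe_castSucc] at this
        have := (σ a).isLt; omega
      · have hab : σ a = σ b := by
          have := congrArg Fin.val (hxi'.trans hyi'.symm)
          simp only [aSideOf, Fin.coe_castSucc] at this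
          exact Fin.ext this
        exact congrArg Sum.inl (hSpart a haS b hbS hab)
    · simp only [aD, Finset.mem_insert, Finset.mem_image] at hx hy
      have hxi' : aSideOf σ x = i := hxi
      have hyi' : aSideOf σ y = i := hyi
      have key : ∀ a ∈ S.erase (s j), aSideOf σ (Sum.inl a) = i →
          aSideOf σ (aNu j : V ⊕ (Fin r ⊕ Fin r)) = i → False := by
        intro a ha h1 h2
        have hval := congrArg Fin.val (h1.trans h2.symm)
        simp only [aSideOf, aNu, Fin.coe_castSucc] at hval
        have hσa : σ a = j := Fin.ext hval
        have haS : a ∈ S := (Finset.mem_erase.mp ha).2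
        have : a = s j := by
          apply hSpart a haS (s j) (hsS j)
          rw [hσa, hsσ]
        exact (Finset.mem_erase.mp ha).1 this
      rcases hx with rfl | rfl | ⟨a, haE, rfl⟩ <;> rcases hy with rfl | rfl | ⟨b, hbE, rfl⟩
      · rfl
      · exfalso
        have := congrArg Fin.val (hxi'.trans hyi'.symm)
        simp only [aSideOf, aNv, aNu, Fin.val_last, Fin.coe_castSucc] at this
        have := j.isLt; omega
      · exfalso
        have := congrArg Fin.val (hxi'.trans hyi'.symm)
        simp only [aSideOf, aNv, Fin.val_last, Fin.coe_castSucc] at this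
        have := (σ b).isLt; omega
      · exfalso
        have := congrArg Fin.val (hxi'.trans hyi'.symm)
        simp only [aSideOf, aNv, aNu, Fin.val_last, Fin.coe_castSucc] at this
        have := j.isLt; omega
      · rfl
      · exact (key b hbE hyi' hxi').elim
      · exfalso
        have := congrArg Fin.val (hxi'.trans hyi'.symm)
        simp only [aSideOf, aNv, Fin.val_last, Fin.coe_castSucc] at this
        have := (σ a).isLt; omega
      · exact (key a haE hxi' hyi').elim
      · have hab : σ a = σ b := by
          have := congrArg Fin.val (hxi'.trans hyi'.symm)
          simp only [aSideOf, Fin.coe_castSucc] at this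
          exact Fin.ext this
        exact congrArg Sum.inl (hSpart a (Finset.mem_erase.mp haE).2 b
          (Finset.mem_erase.mp hbE).2 hab)
  · -- uniform
    rintro e (⟨E, hE, hne, i₀, hsiE, rfl⟩ | ⟨k, rfl⟩ | ⟨j, rfl⟩)
    · rw [aHat, Finset.card_insert_of_notMem (by simp [aNv]),
        Finset.card_image_of_injective _ Sum.inl_injective, hTuni E hE]
    · rw [aSk, Finset.card_insert_of_notMem (by simp [aNv]),
        Finset.card_image_of_injective _ Sum.inl_injective, hScard]
    · rw [aD, Finset.card_insert_of_notMem (by simp [aNv, aNu]),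
        Finset.card_insert_of_notMem (by simp [aNu]),
        Finset.card_image_of_injective _ Sum.inl_injective,
        Finset.card_erase_of_mem (hsS j), hScard]
      omega
  · -- intersecting
    have memHat : ∀ (E : Finset V) (i : Fin r) (x : V), x ∈ E →
        Sum.inl x ∈ aHat E i := fun E i x hx =>
      Finset.mem_insert_of_mem (Finset.mem_image_of_mem _ hx)
    have memSk : ∀ (k : Fin r) (x : V), x ∈ S → Sum.inl x ∈ aSk S k := fun k x hx =>
      Finset.mem_insert_of_mem (Finset.mem_image_of_mem _ hx)
    have memD : ∀ (j : Fin r) (x : V), x ∈ S → x ≠ s j → Sum.inl x ∈ aD S s j :=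
      fun j x hx hne => Finset.mem_insert_of_mem (Finset.mem_insert_of_mem
        (Finset.mem_image_of_mem _ (Finset.mem_erase.mpr ⟨hne, hx⟩)))
    rintro e1 (⟨E, hE, hne, i, hsiE, rfl⟩ | ⟨k, rfl⟩ | ⟨j, rfl⟩) e2
      (⟨E', hE', hne', i', hsiE', rfl⟩ | ⟨k', rfl⟩ | ⟨j', rfl⟩)
    · obtain ⟨x, hx1, hx2⟩ := hTint E hE E' hE'
      exact ⟨Sum.inl x, memHat E i x hx1, memHat E' i' x hx2⟩
    · exact ⟨Sum.inl (s i), memHat E i _ hsiE, memSk k' _ (hsS i)⟩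
    · by_cases hij : i = j'
      · subst hij
        exact ⟨aNv i, Finset.mem_insert_self _ _, Finset.mem_insert_self _ _⟩
      · exact ⟨Sum.inl (s i), memHat E i _ hsiE,
          memD j' _ (hsS i) (fun h => hij (hs_inj h))⟩
    · exact ⟨Sum.inl (s i'), memSk k _ (hsS i'), memHat E' i' _ hsiE'⟩
    · exact ⟨Sum.inl (s k), memSk k _ (hsS k), memSk k' _ (hsS k)⟩
    · obtain ⟨l, hl⟩ := hpick1 j'
      exact ⟨Sum.inl (s l), memSk k _ (hsS l), memD j' _ (hsS l) (fun h => hl (hs_inj h))⟩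
    · by_cases hij : i' = j
      · subst hij
        exact ⟨aNv i', Finset.mem_insert_self _ _, Finset.mem_insert_self _ _⟩
      · exact ⟨Sum.inl (s i'), memD j _ (hsS i') (fun h => hij (hs_inj h)),
          memHat E' i' _ hsiE'⟩
    · obtain ⟨l, hl⟩ := hpick1 j
      exact ⟨Sum.inl (s l), memD j _ (hsS l) (fun h => hl (hs_inj h)), memSk k' _ (hsS l)⟩
    · by_cases hjj : j = j'
      · subst hjj
        exact ⟨aNv j, Finset.mem_insert_self _ _, Finset.mem_insert_self _ _⟩
      · obtain ⟨l, hl1, hl2⟩ := hpick2 j j'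
        exact ⟨Sum.inl (s l), memD j _ (hsS l) (fun h => hl1 (hs_inj h)),
          memD j' _ (hsS l) (fun h => hl2 (hs_inj h))⟩
  · -- cover number
    have hub : (S.image (Sum.inl : V → V ⊕ (Fin r ⊕ Fin r))).card = r := by
      rw [Finset.card_image_of_injective _ Sum.inl_injective, hScard]
    have hcovS : IsCover ↑(S.image (Sum.inl : V → V ⊕ (Fin r ⊕ Fin r))) (aH T S s) := by
      rintro e (⟨E, hE, hne, i, hsiE, rfl⟩ | ⟨k, rfl⟩ | ⟨j, rfl⟩)
      · exact ⟨Sum.inl (s i), Finset.mem_coe.mpr (Finset.mem_image_of_mem _ (hsS i)),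
          Finset.mem_insert_of_mem (Finset.mem_image_of_mem _ hsiE)⟩
      · exact ⟨Sum.inl (s k), Finset.mem_coe.mpr (Finset.mem_image_of_mem _ (hsS k)),
          Finset.mem_insert_of_mem (Finset.mem_image_of_mem _ (hsS k))⟩
      · obtain ⟨k, hk⟩ := hpick1 j
        exact ⟨Sum.inl (s k), Finset.mem_coe.mpr (Finset.mem_image_of_mem _ (hsS k)),
          Finset.mem_insert_of_mem (Finset.mem_insert_of_mem (Finset.mem_image_of_mem _
            (Finset.mem_erase.mpr ⟨fun h => hk (hs_inj h), hsS k⟩)))⟩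
    apply le_antisymm
    · exact Nat.sInf_le ⟨S.image Sum.inl, hcovS, hub⟩
    · refine le_csInf ⟨r, ⟨S.image Sum.inl, hcovS, hub⟩⟩ ?_
      rintro n ⟨C, hC, rfl⟩
      by_contra hn
      push_neg at hn
      -- decompose C
      set C0 : Finset V := C.preimage Sum.inl (Sum.inl_injective.injOn) with hC0
      set Iv : Finset (Fin r) := C.preimage aNv (hnv_inj.injOn) with hIv0
      set Uu : Finset (Fin r) := C.preimage aNu (hnu_inj.injOn) with hUu0
      have hmemC0 : ∀ x : V, x ∈ C0 ↔ Sum.inl x ∈ C := fun x => Finset.mem_preimage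
      have hmemIv : ∀ i : Fin r, i ∈ Iv ↔ aNv i ∈ C := fun i => Finset.mem_preimage
      have hmemUu : ∀ i : Fin r, i ∈ Uu ↔ aNu i ∈ C := fun i => Finset.mem_preimage
      have hcards : C0.card + Iv.card + Uu.card ≤ C.card := by
        have hsub : (C0.image Sum.inl ∪ Iv.image aNv) ∪ Uu.image aNu ⊆ C := by
          intro w hw
          rcases Finset.mem_union.mp hw with hw | hw
          · rcases Finset.mem_union.mp hw with hw | hw
            · obtain ⟨x, hx, rfl⟩ := Finset.mem_image.mp hw
              exact (hmemC0 x).mp hx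
            · obtain ⟨x, hx, rfl⟩ := Finset.mem_image.mp hw
              exact (hmemIv x).mp hx
          · obtain ⟨x, hx, rfl⟩ := Finset.mem_image.mp hw
            exact (hmemUu x).mp hx
        have hd1 : Disjoint (C0.image (Sum.inl : V → V ⊕ (Fin r ⊕ Fin r))) (Iv.image aNv) := by
          rw [Finset.disjoint_left]
          rintro a ha hb
          obtain ⟨x, -, rfl⟩ := Finset.mem_image.mp ha
          obtain ⟨y, -, h⟩ := Finset.mem_image.mp hb
          exact absurd h (by simp [aNv])
        have hd2 : Disjoint ((C0.image (Sum.inl : V → V ⊕ (Fin r ⊕ Fin r))) ∪ Iv.image aNv)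
            (Uu.image aNu) := by
          rw [Finset.disjoint_left]
          rintro a ha hb
          obtain ⟨y, -, rfl⟩ := Finset.mem_image.mp hb
          rcases Finset.mem_union.mp ha with ha | ha
          · obtain ⟨x, -, h⟩ := Finset.mem_image.mp ha
            exact absurd h (by simp [aNu])
          · obtain ⟨x, -, h⟩ := Finset.mem_image.mp ha
            exact absurd h (by simp [aNv, aNu])
        calc C0.card + Iv.card + Uu.card
            = ((C0.image Sum.inl ∪ Iv.image aNv) ∪ Uu.image aNu).card := by
              rw [Finset.card_union_of_disjoint hd2, Finset.card_union_of_disjoint hd1,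
                Finset.card_image_of_injective _ Sum.inl_injective,
                Finset.card_image_of_injective _ hnv_inj,
                Finset.card_image_of_injective _ hnu_inj]
          _ ≤ C.card := Finset.card_le_card hsub
      set C' : Finset V := C0 ∪ Iv.image s with hC'
      have hC'cov : IsCover ↑C' (T \ {S}) := by
        intro E hE'
        have hET : E ∈ T := hE'.1
        have hne : E ≠ S := hE'.2
        obtain ⟨i, hsiE⟩ := hclass E hET hne
        by_cases hi : i ∈ Iv
        · exact ⟨s i, Finset.mem_coe.mpr (Finset.mem_union_right _ (Finset.mem_image_of_mem s hi)), hsiE⟩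
        · obtain ⟨w, hwC, hwE⟩ := hC (aHat E i) (Or.inl ⟨E, hET, hne, i, hsiE, rfl⟩)
          rcases Finset.mem_insert.mp hwE with rfl | hw
          · exact absurd ((hmemIv i).mpr hwC) hi
          · obtain ⟨x, hxE, rfl⟩ := Finset.mem_image.mp hw
            exact ⟨x, Finset.mem_coe.mpr (Finset.mem_union_left _ ((hmemC0 x).mpr hwC)), hxE⟩
      have hC'ge : r - 1 ≤ C'.card := by
        rw [← hτ]
        exact Nat.sInf_le ⟨C', hC'cov, rfl⟩
      have hC'le : C'.card ≤ C0.card + Iv.card :=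
        (Finset.card_union_le _ _).trans (by
          have := Finset.card_image_le (s := Iv) (f := s); omega)
      have hUu0card : Uu.card = 0 := by omega
      have hC'card : C'.card = r - 1 := by omega
      obtain ⟨j, hCj⟩ := hcovers C' hC'cov hC'card
      have hC'mem : ∀ x ∈ C', x ∈ sides j := by
        intro x hx
        rw [← hCj]
        exact hx
      have hIsub : ∀ i ∈ Iv, i = j := by
        intro i hi
        have hsC' : s i ∈ C' := Finset.mem_union_right _ (Finset.mem_image_of_mem s hi)
        have := hσu (s i) j (hC'mem _ hsC')
        rw [hsσ] at this
        exact this.symm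
      rcases Finset.eq_empty_or_nonempty Iv with hIvE | ⟨i₀, hi₀⟩
      · -- no new vertices in the cover: C0 is the side j, but misses D j
        obtain ⟨w, hwC, hwD⟩ := hC (aD S s j) (Or.inr (Or.inr ⟨j, rfl⟩))
        rcases Finset.mem_insert.mp hwD with rfl | hwD
        · have : j ∈ Iv := (hmemIv j).mpr hwC
          simp [hIvE] at this
        rcases Finset.mem_insert.mp hwD with rfl | hwD
        · have : j ∈ Uu := (hmemUu j).mpr hwC
          have := Finset.card_eq_zero.mp hUu0card
          simp [this] at *
        obtain ⟨x, hxE, rfl⟩ := Finset.mem_image.mp hwD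
        have hxC0 : x ∈ C0 := (hmemC0 x).mpr hwC
        have hxside : x ∈ sides j := hC'mem x (Finset.mem_union_left _ hxC0)
        have hxS : x ∈ S := (Finset.mem_erase.mp hxE).2
        have : x = s j := by
          apply hSpart x hxS (s j) (hsS j)
          rw [hsσ]
          exact (hσu x j hxside).symm
        exact (Finset.mem_erase.mp hxE).1 this
      · -- v_j is in the cover: C misses the S-edge Ŝ_k unless s j ∈ C0, contradiction
        have hjIv : j ∈ Iv := hIsub i₀ hi₀ ▸ hi₀
        obtain ⟨k, hk⟩ := hpick1 j
        obtain ⟨w, hwC, hwS⟩ := hC (aSk S k) (Or.inr (Or.inl ⟨k, rfl⟩))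
        rcases Finset.mem_insert.mp hwS with rfl | hwS
        · exact hk (hIsub k ((hmemIv k).mpr hwC))
        obtain ⟨x, hxS, rfl⟩ := Finset.mem_image.mp hwS
        have hxC0 : x ∈ C0 := (hmemC0 x).mpr hwC
        have hxside : x ∈ sides j := hC'mem x (Finset.mem_union_left _ hxC0)
        have hxsj : x = s j := by
          apply hSpart x hxS (s j) (hsS j)
          rw [hsσ]
          exact (hσu x j hxside).symm
        have hsjC0 : s j ∈ C0 := hxsj ▸ hxC0
        have hsubC0 : C' ⊆ C0 := by
          apply Finset.union_subset (Finset.Subset.refl _)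
          intro y hy
          obtain ⟨i, hi, rfl⟩ := Finset.mem_image.mp hy
          rw [hIsub i hi]
          exact hsjC0
        have h1 : C'.card ≤ C0.card := Finset.card_le_card hsubC0
        have h2 : 1 ≤ Iv.card := Finset.card_pos.mpr ⟨i₀, hi₀⟩
        omega

lemma fano_case : ∃ (W : Type u) (H : Set (Finset W)) (sides' : Fin 3 → Set W),
    Partite H sides' ∧ Uniform H 3 ∧ Intersecting H ∧ coverNumber H = 2 := by
  refine ⟨ULift.{u} (Fin 6),
    {({.up 0, .up 2, .up 4} : Finset (ULift (Fin 6))), {.up 0, .up 3, .up 5},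
     {.up 1, .up 2, .up 5}, {.up 1, .up 3, .up 4}},
    fun i => {w | (w.down : ℕ) / 2 = (i : ℕ)}, ⟨?_, ?_⟩, ?_, ?_, ?_⟩
  · intro w
    refine ⟨⟨(w.down : ℕ) / 2, by omega⟩, rfl, ?_⟩
    rintro j hj
    exact Fin.ext hj.symm
  · intro e he i x hx y hy hxi hyi
    simp only [Set.mem_insert_iff, Set.mem_singleton_iff] at he
    have hxi' : ((x.down : ℕ) / 2 = (i : ℕ)) := hxi
    have hyi' : ((y.down : ℕ) / 2 = (i : ℕ)) := hyi
    rcases he with rfl | rfl | rfl | rfl <;> fin_cases i <;>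
      (fin_cases hx <;> fin_cases hy <;> first | rfl | (exfalso; revert hxi' hyi'; decide))
  · intro e he
    simp only [Set.mem_insert_iff, Set.mem_singleton_iff] at he
    rcases he with rfl | rfl | rfl | rfl <;> decide
  · intro e1 h1 e2 h2
    simp only [Set.mem_insert_iff, Set.mem_singleton_iff] at h1 h2
    rcases h1 with rfl | rfl | rfl | rfl <;> rcases h2 with rfl | rfl | rfl | rfl <;> decide
  · apply le_antisymm
    · apply Nat.sInf_le
      refine ⟨{.up 0, .up 1}, ?_, by decide⟩
      intro e he
      simp only [Set.mem_insert_iff, Set.mem_singleton_iff] at he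
      rcases he with rfl | rfl | rfl | rfl
      · exact ⟨.up 0, by decide, by decide⟩
      · exact ⟨.up 0, by decide, by decide⟩
      · exact ⟨.up 1, by decide, by decide⟩
      · exact ⟨.up 1, by decide, by decide⟩
    · apply le_csInf
      · refine ⟨6, Finset.univ, ?_, by decide⟩
        intro e he
        simp only [Set.mem_insert_iff, Set.mem_singleton_iff] at he
        rcases he with rfl | rfl | rfl | rfl
        · exact ⟨.up 0, by decide, by decide⟩
        · exact ⟨.up 0, by decide, by decide⟩
        · exact ⟨.up 1, by decide, by decide⟩
        · exact ⟨.up 1, by decide, by decide⟩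
      · rintro n ⟨C, hC, rfl⟩
        by_contra hlt
        push_neg at hlt
        have hcard : C.card ≤ 1 := by omega
        obtain ⟨w1, hw1C, hw1⟩ := hC {.up 0, .up 2, .up 4} (by simp)
        obtain ⟨w2, hw2C, hw2⟩ := hC {.up 0, .up 3, .up 5} (by simp)
        obtain ⟨w3, hw3C, hw3⟩ := hC {.up 1, .up 2, .up 5} (by simp)
        have e12 : w1 = w2 := Finset.card_le_one.mp hcard _ hw1C _ hw2C
        have e13 : w1 = w3 := Finset.card_le_one.mp hcard _ hw1C _ hw3C
        subst e12
        subst e13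
        have key : ∀ w : ULift.{u} (Fin 6), w ∈ ({.up 0, .up 2, .up 4} : Finset (ULift.{u} (Fin 6))) →
            w ∈ ({.up 0, .up 3, .up 5} : Finset (ULift.{u} (Fin 6))) →
            w ∈ ({.up 1, .up 2, .up 5} : Finset (ULift.{u} (Fin 6))) → False := by decide
        exact key w1 hw1 hw2 hw3


theorem statement_0 {V : Type u} {r : ℕ} (hr : 2 ≤ r)
    (T : Set (Finset V)) (sides : Fin r → Set V)
    (hTint : Intersecting T) (hTuni : Uniform T r) (hTpart : Partite T sides)
    (S : Finset V) (hS : S ∈ T)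
    (hSint : ∀ E ∈ T, E ≠ S → ∃! x, x ∈ E ∧ x ∈ S)
    (hτ : coverNumber (T \ {S}) = r - 1)
    (hcovers : ∀ C : Finset V, IsCover (↑C) (T \ {S}) → C.card = r - 1 →
      ∃ i, (C : Set V) = sides i) :
    ∃ (W : Type u) (H : Set (Finset W)) (sides' : Fin (r + 1) → Set W),
      Partite H sides' ∧ Uniform H (r + 1) ∧ Intersecting H ∧ coverNumber H = r := by
  rcases lt_or_eq_of_le hr with hr3 | hr2
  · exact main_case hr3 T sides hTint hTuni hTpart S hS hSint hτ hcovers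
  · subst hr2
    exact fano_case


end
end

section
/- For any prime power q, there exists a (q+2)-partite (q+2)-uniform intersecting hypergraph H with cover number τ(H) = q+1 (i.e., an intersecting (q+2)-Ryser hypergraph). -/
open Finset

noncomputable section
open scoped Classical

open Configuration

/-!
Let `K` be a field with `q` elements and look at the projective plane over `K` truncated at the
origin `w` of `K²`: its lines not through `w` form a `(q+1)`-partite intersecting hypergraph whose
sides are the lines through `w`. Delete the edge given by the line at infinity `S`, extend every
other edge by a new vertex `v_d`, where `d` is its point on `S`, and for each `d ∈ S` add the edge
`(S \ {d}) ∪ {u_d, v_d}` with a fresh vertex `u_d`; the `v_d` form the new side.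

The `q + 1` vertices `v_d` cover every edge. A cover with at most `q` vertices misses some
triple `{d, u_d, v_d}`. The `q - 1` lines of direction `d` then need `q - 1` distinct affine
vertices of the cover, while the edge at `d` is covered by some `d' ∈ S` and the edge at `d'`,
which avoids `d'`, needs one more non-affine vertex.
-/

lemma partite_of_injOn {V ι : Type*} {r : ℕ} {H : Set (Finset V)} (σ : V → ι) (e : Fin r ≃ ι)
    (h : ∀ E ∈ H, Set.InjOn σ E) : Partite H fun i => σ ⁻¹' {e i} := by
  refine ⟨fun v => ⟨e.symm (σ v), by simp, fun i hi => ?_⟩,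
    fun E hE i x hx y hy hxi hyi => h E hE hx hy (hxi.trans hyi.symm)⟩
  change σ v = e i at hi
  rw [hi, Equiv.symm_apply_apply]

lemma coverNumber_eq_of_isCover {V : Type*} {H : Set (Finset V)} {k : ℕ}
    (hC : ∃ C : Finset V, IsCover ↑C H ∧ #C = k) (hmin : ∀ C : Finset V, IsCover ↑C H → k ≤ #C) :
    coverNumber H = k :=
  le_antisymm (Nat.sInf_le hC) (le_csInf ⟨k, hC⟩ fun _ ⟨C, hC, hk⟩ => hk ▸ hmin C hC)

open scoped LinearAlgebra.Projectivization
open Projectivization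

namespace Ryser

section Cross

variable {K : Type*} [Field K]

-- `{p | cross n p = 1}` is a line parallel to `n`; every line missing the origin is of this form
-- for exactly one `n`.
def cross (n p : K × K) : K := n.1 * p.2 - n.2 * p.1

lemma cross_self (n : K × K) : cross n n = 0 := by
  simp only [cross]; ring

lemma cross_comm (n p : K × K) : cross p n = -cross n p := by
  simp only [cross]; ring

lemma cross_zero_right (n : K × K) : cross n 0 = 0 := by
  simp [cross]

lemma cross_smul_left (a : K) (n p : K × K) : cross (a • n) p = a * cross n p := by
  simp only [cross, Prod.smul_fst, Prod.smul_snd, smul_eq_mul]; ring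

lemma cross_smul_right (a : K) (n p : K × K) : cross n (a • p) = a * cross n p := by
  simp only [cross, Prod.smul_fst, Prod.smul_snd, smul_eq_mul]; ring

lemma cross_add_right (n p p' : K × K) : cross n (p + p') = cross n p + cross n p' := by
  simp only [cross, Prod.fst_add, Prod.snd_add]; ring

lemma cross_sub_right (n p p' : K × K) : cross n (p - p') = cross n p - cross n p' := by
  simp only [cross, Prod.fst_sub, Prod.snd_sub]; ring

lemma exists_smul_eq_of_cross_eq_zero {n p : K × K} (hn : n ≠ 0) (h : cross n p = 0) :
    ∃ t : K, t • n = p := by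
  obtain ⟨n₁, n₂⟩ := n
  obtain ⟨p₁, p₂⟩ := p
  simp only [cross, sub_eq_zero] at h
  by_cases h₁ : n₁ = 0
  · have h₂ : n₂ ≠ 0 := fun h₂ => hn (by simp [h₁, h₂])
    subst h₁
    refine ⟨p₂ / n₂, Prod.ext ?_ ?_⟩ <;> simp only [Prod.smul_mk, smul_eq_mul]
    · simpa [h₂, eq_comm] using h
    · field_simp
  · refine ⟨p₁ / n₁, Prod.ext ?_ ?_⟩ <;> simp only [Prod.smul_mk, smul_eq_mul]
    · field_simp
    · field_simp
      linear_combination -h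

lemma exists_cross_eq_one {n : K × K} (hn : n ≠ 0) : ∃ p, cross n p = 1 := by
  by_cases h₁ : n.1 = 0
  · have h₂ : n.2 ≠ 0 := fun h₂ => hn (Prod.ext h₁ h₂)
    exact ⟨(-n.2⁻¹, 0), by simp [cross, h₂]⟩
  · exact ⟨(0, n.1⁻¹), by simp [cross, h₁]⟩

lemma mk_eq_mk_iff_cross_eq_zero {n m : K × K} (hn : n ≠ 0) (hm : m ≠ 0) :
    mk K n hn = mk K m hm ↔ cross n m = 0 := by
  rw [mk_eq_mk_iff']
  constructor
  · rintro ⟨a, rfl⟩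
    rw [cross_smul_left, cross_self, mul_zero]
  · intro h
    exact exists_smul_eq_of_cross_eq_zero hm (by rw [cross_comm, h, neg_zero])

lemma ne_zero_of_cross_eq_one {n p : K × K} (h : cross n p = 1) : p ≠ 0 := by
  rintro rfl
  rw [cross_zero_right] at h
  exact zero_ne_one h

lemma eq_of_mk_eq_of_cross_eq_one {n p p' : K × K} (hp : p ≠ 0) (hp' : p' ≠ 0)
    (h : mk K p hp = mk K p' hp') (h₁ : cross n p = 1) (h₁' : cross n p' = 1) : p = p' := by
  obtain ⟨a, rfl⟩ := (mk_eq_mk_iff' K _ _ hp hp').1 h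
  rw [cross_smul_right, h₁', mul_one] at h₁
  rw [h₁, one_smul]

end Cross

variable (K : Type) [Field K]

-- The affine points other than the origin `w`, the points at infinity (indexed by direction), and
-- the vertices `u_d = dummy d` and `v_d = apex d` added for each point at infinity `d`.
inductive Vertex : Type
  | affine : {p : K × K // p ≠ 0} → Vertex
  | atInfinity : ℙ K (K × K) → Vertex
  | dummy : ℙ K (K × K) → Vertex
  | apex : ℙ K (K × K) → Vertex

variable {K}

namespace Vertex

-- The side `some d` is the line through `w` with point at infinity `d`, together with `u_d`.
def side : Vertex K → Option (ℙ K (K × K))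
  | affine p => some (mk K p.1 p.2)
  | atInfinity d => some d
  | dummy d => some d
  | apex _ => none

def IsAffine : Vertex K → Prop
  | affine _ => True
  | _ => False

end Vertex

open Vertex

def direction (n : {n : K × K // n ≠ 0}) : ℙ K (K × K) := mk K n.1 n.2

def triple (d : ℙ K (K × K)) : Finset (Vertex K) := {atInfinity d, dummy d, apex d}

lemma eq_of_mem_triple {d d' : ℙ K (K × K)} {v : Vertex K} (h : v ∈ triple d)
    (h' : v ∈ triple d') : d = d' := by
  simp only [triple, mem_insert, mem_singleton] at h h'
  rcases h with rfl | rfl | rfl <;> simpa using h'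

def parallelLine (d : ℙ K (K × K)) (a : Kˣ) : {n : K × K // n ≠ 0} :=
  ⟨(a : K) • d.rep, smul_ne_zero a.ne_zero d.rep_nonzero⟩

lemma direction_parallelLine (d : ℙ K (K × K)) (a : Kˣ) : direction (parallelLine d a) = d := by
  conv_rhs => rw [← mk_rep d]
  exact (mk_eq_mk_iff' K _ _ _ d.rep_nonzero).2 ⟨a, rfl⟩

section LineEdge

variable [Fintype K]

def affinePoints (n : K × K) : Finset {p : K × K // p ≠ 0} := {p | cross n p.1 = 1}

def lineEdge (n : {n : K × K // n ≠ 0}) : Finset (Vertex K) :=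
  insert (atInfinity (direction n)) (insert (apex (direction n)) ((affinePoints n).image affine))

lemma card_affinePoints {n : K × K} (hn : n ≠ 0) :
    #(affinePoints n) = Fintype.card K := by
  obtain ⟨p₀, hp₀⟩ := exists_cross_eq_one hn
  have hcross : ∀ t : K, cross n (p₀ + t • n) = 1 := fun t => by
    rw [cross_add_right, cross_smul_right, cross_self, mul_zero, add_zero, hp₀]
  let f : K → {p : K × K // p ≠ 0} := fun t => ⟨p₀ + t • n, ne_zero_of_cross_eq_one (hcross t)⟩
  have hf : Function.Injective f := fun s t h =>
    smul_left_injective K hn (add_left_cancel (congrArg Subtype.val h))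
  have himage : affinePoints n = univ.image f := by
    ext ⟨p, hp⟩
    simp only [affinePoints, mem_filter, mem_univ, true_and, mem_image, f, Subtype.mk.injEq]
    constructor
    · intro h
      obtain ⟨t, ht⟩ := exists_smul_eq_of_cross_eq_zero hn
        (by rw [cross_sub_right, h, hp₀, sub_self] : cross n (p - p₀) = 0)
      exact ⟨t, by rw [ht, add_sub_cancel]⟩
    · rintro ⟨t, rfl⟩
      exact hcross t
  rw [himage, card_image_of_injective _ hf, card_univ]

lemma mem_lineEdge {n : {n : K × K // n ≠ 0}} {v : Vertex K} :
    v ∈ lineEdge n ↔ v = atInfinity (direction n) ∨ v = apex (direction n) ∨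
      ∃ p : {p : K × K // p ≠ 0}, cross n.1 p.1 = 1 ∧ affine p = v := by
  simp [lineEdge, affinePoints]

lemma card_lineEdge (n : {n : K × K // n ≠ 0}) :
    #(lineEdge n) = Fintype.card K + 2 := by
  have haffine : Function.Injective (affine (K := K)) := fun _ _ h => by injection h
  rw [lineEdge, card_insert_of_notMem, card_insert_of_notMem,
    card_image_of_injective _ haffine, card_affinePoints n.2] <;> simp

lemma mem_triple_or_exists_affine_of_mem_lineEdge {n : {n : K × K // n ≠ 0}}
    {v : Vertex K} (hv : v ∈ lineEdge n) :
    v ∈ triple (direction n) ∨ ∃ p : {p : K × K // p ≠ 0}, cross n.1 p.1 = 1 ∧ affine p = v := by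
  rcases mem_lineEdge.1 hv with rfl | rfl | h
  · simp [triple]
  · simp [triple]
  · exact Or.inr h

lemma injOn_side_lineEdge (n : {n : K × K // n ≠ 0}) :
    Set.InjOn side (lineEdge n : Set (Vertex K)) := by
  intro x hx y hy hxy
  rw [mem_coe, mem_lineEdge] at hx hy
  rcases hx with rfl | rfl | ⟨p, hp, rfl⟩ <;> rcases hy with rfl | rfl | ⟨p', hp', rfl⟩ <;>
    simp only [side, Option.some.injEq, reduceCtorEq] at hxy
  · rfl
  · rw [direction, mk_eq_mk_iff_cross_eq_zero, hp'] at hxy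
    exact absurd hxy one_ne_zero
  · rfl
  · rw [direction, mk_eq_mk_iff_cross_eq_zero, cross_comm, hp, neg_eq_zero] at hxy
    exact absurd hxy one_ne_zero
  · exact congrArg affine (Subtype.ext (eq_of_mk_eq_of_cross_eq_one _ _ hxy hp hp'))

lemma exists_mem_lineEdge_lineEdge (n n' : {n : K × K // n ≠ 0}) :
    ∃ v, v ∈ lineEdge n ∧ v ∈ lineEdge n' := by
  by_cases h : direction n = direction n'
  · exact ⟨atInfinity (direction n), by simp [mem_lineEdge], by simp [mem_lineEdge, h]⟩
  have hc : cross n.1 n'.1 ≠ 0 := by rwa [direction, direction, mk_eq_mk_iff_cross_eq_zero] at h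
  set p := (cross n.1 n'.1)⁻¹ • (n'.1 - n.1)
  have hp : cross n.1 p = 1 := by
    rw [cross_smul_right, cross_sub_right, cross_self, sub_zero, inv_mul_cancel₀ hc]
  have hp' : cross n'.1 p = 1 := by
    rw [cross_smul_right, cross_sub_right, cross_self, zero_sub, cross_comm n.1 n'.1, neg_neg,
      inv_mul_cancel₀ hc]
  exact ⟨affine ⟨p, ne_zero_of_cross_eq_one hp⟩, mem_lineEdge.2 (Or.inr (Or.inr ⟨_, hp, rfl⟩)),
    mem_lineEdge.2 (Or.inr (Or.inr ⟨_, hp', rfl⟩))⟩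

end LineEdge

section BaseEdge

variable [Fintype (ℙ K (K × K))]

def baseEdge (d : ℙ K (K × K)) : Finset (Vertex K) :=
  insert (dummy d) (insert (apex d) ((univ.erase d).image atInfinity))

lemma mem_baseEdge {d : ℙ K (K × K)} {v : Vertex K} :
    v ∈ baseEdge d ↔ v = dummy d ∨ v = apex d ∨ ∃ d' ≠ d, atInfinity d' = v := by
  simp [baseEdge]

lemma not_isAffine_of_mem_baseEdge {d : ℙ K (K × K)} {v : Vertex K}
    (hv : v ∈ baseEdge d) : ¬v.IsAffine := by
  rcases mem_baseEdge.1 hv with rfl | rfl | ⟨e, -, rfl⟩ <;> exact id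

lemma injOn_side_baseEdge (d : ℙ K (K × K)) :
    Set.InjOn side (baseEdge d : Set (Vertex K)) := by
  intro x hx y hy hxy
  rw [mem_coe, mem_baseEdge] at hx hy
  rcases hx with rfl | rfl | ⟨e, he, rfl⟩ <;> rcases hy with rfl | rfl | ⟨e', he', rfl⟩ <;>
    simp_all [side]

end BaseEdge

variable [Fintype K] [Fintype (ℙ K (K × K))]

variable (K) in
def hypergraph : Set (Finset (Vertex K)) :=
  Set.range lineEdge ∪ Set.range baseEdge

lemma card_directions :
    Fintype.card (ℙ K (K × K)) = Fintype.card K + 1 := by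
  rw [Fintype.card_eq_nat_card, card_of_finrank_two, Nat.card_eq_fintype_card]
  simp

lemma card_baseEdge (d : ℙ K (K × K)) :
    #(baseEdge d) = Fintype.card K + 2 := by
  have hatInfinity : Function.Injective (atInfinity (K := K)) := fun _ _ h => by injection h
  rw [baseEdge, card_insert_of_notMem, card_insert_of_notMem,
    card_image_of_injective _ hatInfinity, card_erase_of_mem (mem_univ d), card_univ,
    card_directions] <;> simp

lemma uniform_hypergraph :
    Uniform (hypergraph K) (Fintype.card K + 2) := by
  rintro e (⟨n, rfl⟩ | ⟨d, rfl⟩)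
  · exact card_lineEdge n
  · exact card_baseEdge d

lemma partite_hypergraph :
    ∃ sides : Fin (Fintype.card K + 2) → Set (Vertex K), Partite (hypergraph K) sides := by
  have hcard : Fintype.card (Option (ℙ K (K × K))) = Fintype.card K + 2 := by
    rw [Fintype.card_option, card_directions]
  refine ⟨_, partite_of_injOn side (Fintype.equivFinOfCardEq hcard).symm ?_⟩
  rintro e (⟨n, rfl⟩ | ⟨d, rfl⟩)
  · exact injOn_side_lineEdge n
  · exact injOn_side_baseEdge d

lemma exists_mem_lineEdge_baseEdge
    (n : {n : K × K // n ≠ 0}) (d : ℙ K (K × K)) : ∃ v, v ∈ lineEdge n ∧ v ∈ baseEdge d := by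
  by_cases h : direction n = d
  · exact ⟨apex d, by simp [mem_lineEdge, h], by simp [mem_baseEdge]⟩
  · exact ⟨atInfinity (direction n), by simp [mem_lineEdge], by simp [mem_baseEdge, h]⟩

lemma exists_mem_baseEdge_baseEdge (d d' : ℙ K (K × K)) :
    ∃ v, v ∈ baseEdge d ∧ v ∈ baseEdge d' := by
  by_cases h : d = d'
  · exact ⟨apex d, by simp [mem_baseEdge], by simp [mem_baseEdge, h]⟩
  have hcard : 0 < #((univ.erase d).erase d') := by
    rw [card_erase_of_mem (mem_erase.2 ⟨Ne.symm h, mem_univ _⟩), card_erase_of_mem (mem_univ _),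
      card_univ, card_directions]
    have := Fintype.one_lt_card (α := K)
    omega
  obtain ⟨e, he⟩ := card_pos.1 hcard
  simp only [mem_erase, mem_univ, and_true] at he
  exact ⟨atInfinity e, by simp [mem_baseEdge, he.2], by simp [mem_baseEdge, he.1]⟩

lemma intersecting_hypergraph :
    Intersecting (hypergraph K) := by
  rintro e₁ (⟨n, rfl⟩ | ⟨d, rfl⟩) e₂ (⟨n', rfl⟩ | ⟨d', rfl⟩)
  · exact exists_mem_lineEdge_lineEdge n n'
  · exact exists_mem_lineEdge_baseEdge n d'
  · obtain ⟨v, hv, hv'⟩ := exists_mem_lineEdge_baseEdge n' d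
    exact ⟨v, hv', hv⟩
  · exact exists_mem_baseEdge_baseEdge d d'

lemma isCover_apex :
    IsCover ↑(univ.image (apex (K := K))) (hypergraph K) := by
  rintro e (⟨n, rfl⟩ | ⟨d, rfl⟩)
  · exact ⟨apex (direction n), by simp, by simp [mem_lineEdge]⟩
  · exact ⟨apex d, by simp, by simp [mem_baseEdge]⟩

variable {C : Finset (Vertex K)}

lemma card_units_le_card_filter_isAffine (hC : IsCover ↑C (hypergraph K)) {d : ℙ K (K × K)}
    (hd : ∀ v ∈ C, v ∉ triple d) : Fintype.card Kˣ ≤ #(C.filter IsAffine) := by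
  have hcover : ∀ a : Kˣ, ∃ v ∈ C, v ∈ lineEdge (parallelLine d a) :=
    fun a => hC _ (Or.inl ⟨_, rfl⟩)
  choose κ hκC hκ using hcover
  have hκ_affine : ∀ a : Kˣ,
      ∃ p : {p : K × K // p ≠ 0}, (a : K) * cross d.rep p = 1 ∧ affine p = κ a := by
    intro a
    rcases mem_triple_or_exists_affine_of_mem_lineEdge (hκ a) with h | ⟨p, hp, hpκ⟩
    · rw [direction_parallelLine] at h
      exact absurd h (hd _ (hκC a))
    · exact ⟨p, by rwa [parallelLine, cross_smul_left] at hp, hpκ⟩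
  have hκ_inj : Function.Injective κ := by
    intro a b hab
    obtain ⟨p, hp, hpa⟩ := hκ_affine a
    obtain ⟨p', hp', hpb⟩ := hκ_affine b
    obtain rfl : p = p' := by injection hpa.trans (hab.trans hpb.symm)
    exact Units.ext (mul_right_cancel₀ (right_ne_zero_of_mul_eq_one hp) (hp.trans hp'.symm))
  have hκ_mem : ∀ a ∈ (univ : Finset Kˣ), κ a ∈ C.filter IsAffine := by
    intro a _
    obtain ⟨p, -, hpκ⟩ := hκ_affine a
    exact mem_filter.2 ⟨hκC a, hpκ ▸ trivial⟩
  simpa only [card_univ] using card_le_card_of_injOn κ hκ_mem hκ_inj.injOn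

lemma two_le_card_filter_not_isAffine (hC : IsCover ↑C (hypergraph K)) {d : ℙ K (K × K)}
    (hd : ∀ v ∈ C, v ∉ triple d) : 2 ≤ #(C.filter fun v => ¬v.IsAffine) := by
  obtain ⟨u, huC, hu⟩ := hC (baseEdge d) (Or.inr ⟨d, rfl⟩)
  obtain ⟨d', -, rfl⟩ : ∃ d' ≠ d, atInfinity d' = u := by
    rcases mem_baseEdge.1 hu with rfl | rfl | h
    · exact absurd (by simp [triple]) (hd _ huC)
    · exact absurd (by simp [triple]) (hd _ huC)
    · exact h
  obtain ⟨w, hwC, hw⟩ := hC (baseEdge d') (Or.inr ⟨d', rfl⟩)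
  have hwu : w ≠ atInfinity d' := by
    rintro rfl
    simp [mem_baseEdge] at hw
  refine one_lt_card.2 ⟨w, mem_filter.2 ⟨hwC, not_isAffine_of_mem_baseEdge hw⟩,
    atInfinity d', mem_filter.2 ⟨huC, not_isAffine_of_mem_baseEdge hu⟩, hwu⟩

lemma card_le_of_forall_exists_mem_triple (h : ∀ d : ℙ K (K × K), ∃ v ∈ C, v ∈ triple d) :
    Fintype.card K + 1 ≤ #C := by
  choose f hfC hf using h
  have hf_inj : Function.Injective f := fun d d' hdd' =>
    eq_of_mem_triple (hf d) (hdd' ▸ hf d')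
  rw [← card_directions]
  simpa only [card_univ] using card_le_card_of_injOn (s := univ) f (fun d _ => hfC d) hf_inj.injOn

lemma card_le_of_isCover (hC : IsCover ↑C (hypergraph K)) : Fintype.card K + 1 ≤ #C := by
  by_cases h : ∀ d : ℙ K (K × K), ∃ v ∈ C, v ∈ triple d
  · exact card_le_of_forall_exists_mem_triple h
  push Not at h
  obtain ⟨d, hd⟩ := h
  have hq := Fintype.card_pos (α := K)
  have h₁ := card_units_le_card_filter_isAffine hC hd
  have h₂ := two_le_card_filter_not_isAffine hC hd
  rw [Fintype.card_units] at h₁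
  rw [← card_filter_add_card_filter_not IsAffine]
  omega

lemma coverNumber_hypergraph : coverNumber (hypergraph K) = Fintype.card K + 1 := by
  refine coverNumber_eq_of_isCover ⟨_, isCover_apex, ?_⟩ fun C hC => card_le_of_isCover hC
  rw [card_image_of_injective _ fun _ _ h => by injection h, card_univ, card_directions]

end Ryser

theorem statement_1 (q : ℕ) (hq : IsPrimePow q) :
    ∃ (W : Type) (H : Set (Finset W)) (sides : Fin (q + 2) → Set W),
      Partite H sides ∧ Uniform H (q + 2) ∧ Intersecting H ∧ coverNumber H = q + 1 := by
  obtain ⟨p, k, hp, hk, rfl⟩ := hq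
  have : Fact p.Prime := ⟨Nat.prime_iff.2 hp⟩
  let K := GaloisField p k
  have : Fintype K := Fintype.ofFinite K
  have : Fintype (ℙ K (K × K)) := Fintype.ofFinite _
  have hcard : Fintype.card K = p ^ k := by
    rw [Fintype.card_eq_nat_card, GaloisField.card p k hk.ne']
  obtain ⟨sides, hsides⟩ := Ryser.partite_hypergraph (K := K)
  rw [← hcard]
  exact ⟨_, _, sides, hsides, Ryser.uniform_hypergraph, Ryser.intersecting_hypergraph,
    Ryser.coverNumber_hypergraph⟩

end
end

section
/- Under the construction hypotheses, the hypergraph H(T,S,F_1,…,F_r) is intersecting: any two of its edges have a common vertex. -/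
open Finset

noncomputable section
open scoped Classical

open Configuration

theorem statement_3 {V : Type*} {r : ℕ}
    (T : Set (Finset V)) (sides : Fin r → Set V)
    (hTint : Intersecting T) (hTuni : Uniform T r) (hTpart : Partite T sides)
    (s : Fin r → V) (hside : ∀ i, s i ∈ sides i)
    (S : Finset V) (hSdef : S = Finset.univ.image s) (hS : S ∈ T)
    (hSint : ∀ E ∈ T, E ≠ S → ∃! x, x ∈ E ∧ x ∈ S)
    (F : Fin r → Finset V) (hF : ∀ i, F i ∈ T) (hsF : ∀ i, s i ∈ F i)
    (hFF : ∀ i j, ∃ x, x ∈ (F i).erase (s i) ∧ x ∈ (F j).erase (s j)) :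
    Intersecting (constructionH T S s F) := by
  have hsinj : Function.Injective s := by
    intro i j hij
    obtain ⟨k, hk, huniq⟩ := hTpart.1 (s i)
    have h1 : i = k := huniq i (hside i)
    have h2 : j = k := huniq j (by rw [hij]; exact hside j)
    exact h1.trans h2.symm
  have hsS : ∀ i, s i ∈ S := fun i => by
    rw [hSdef]; exact Finset.mem_image_of_mem s (Finset.mem_univ i)
  -- key: if E ∈ T, E ≠ S, s i ∈ E, i ≠ j then E meets (F j).erase (s j)
  have key : ∀ E ∈ T, E ≠ S → ∀ i j : Fin r, s i ∈ E → i ≠ j →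
      ∃ x, x ∈ E ∧ x ∈ (F j).erase (s j) := by
    intro E hE hES i j hsi hij
    obtain ⟨x, hx1, hx2⟩ := hTint E hE (F j) (hF j)
    refine ⟨x, hx1, Finset.mem_erase.mpr ⟨?_, hx2⟩⟩
    intro hxsj
    obtain ⟨y, hy, huniq⟩ := hSint E hE hES
    have h1 := huniq (s j) ⟨hxsj ▸ hx1, hsS j⟩
    have h2 := huniq (s i) ⟨hsi, hsS i⟩
    exact hij (hsinj (h2.trans h1.symm))
  have memhat : ∀ (E : Finset V) (i : Fin r) (x : V), x ∈ E → Sum.inl x ∈ hatE E i := by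
    intro E i x hx
    exact Finset.mem_insert_of_mem (Finset.mem_image_of_mem _ hx)
  have memhat' : ∀ (E : Finset V) (i : Fin r), Sum.inr i ∈ hatE E i := by
    intro E i; exact Finset.mem_insert_self _ _
  intro e₁ he₁ e₂ he₂
  rcases he₁ with (⟨E₁, hE₁, hE₁S, i₁, hs₁, rfl⟩ | ⟨i₁, rfl⟩) | ⟨i₁, rfl⟩ <;>
    rcases he₂ with (⟨E₂, hE₂, hE₂S, i₂, hs₂, rfl⟩ | ⟨i₂, rfl⟩) | ⟨i₂, rfl⟩
  · obtain ⟨x, hx1, hx2⟩ := hTint E₁ hE₁ E₂ hE₂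
    exact ⟨Sum.inl x, memhat _ _ _ hx1, memhat _ _ _ hx2⟩
  · obtain ⟨x, hx1, hx2⟩ := hTint E₁ hE₁ (F i₂) (hF i₂)
    exact ⟨Sum.inl x, memhat _ _ _ hx1, Finset.mem_image_of_mem _ hx2⟩
  · by_cases h : i₁ = i₂
    · exact ⟨Sum.inr i₁, memhat' _ _, h ▸ memhat' _ _⟩
    · obtain ⟨x, hx1, hx2⟩ := key E₁ hE₁ hE₁S i₁ i₂ hs₁ h
      exact ⟨Sum.inl x, memhat _ _ _ hx1, memhat _ _ _ hx2⟩
  · obtain ⟨x, hx1, hx2⟩ := hTint (F i₁) (hF i₁) E₂ hE₂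
    exact ⟨Sum.inl x, Finset.mem_image_of_mem _ hx1, memhat _ _ _ hx2⟩
  · obtain ⟨x, hx1, hx2⟩ := hTint (F i₁) (hF i₁) (F i₂) (hF i₂)
    exact ⟨Sum.inl x, Finset.mem_image_of_mem _ hx1, Finset.mem_image_of_mem _ hx2⟩
  · obtain ⟨x, hx1, hx2⟩ := hFF i₁ i₂
    exact ⟨Sum.inl x, Finset.mem_image_of_mem _ (Finset.mem_of_mem_erase hx1),
      memhat _ _ _ hx2⟩
  · by_cases h : i₁ = i₂
    · exact ⟨Sum.inr i₁, memhat' _ _, h ▸ memhat' _ _⟩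
    · obtain ⟨x, hx1, hx2⟩ := key E₂ hE₂ hE₂S i₂ i₁ hs₂ (fun hh => h hh.symm)
      exact ⟨Sum.inl x, memhat _ _ _ hx2, memhat _ _ _ hx1⟩
  · obtain ⟨x, hx1, hx2⟩ := hFF i₁ i₂
    exact ⟨Sum.inl x, memhat _ _ _ hx1, Finset.mem_image_of_mem _ (Finset.mem_of_mem_erase hx2)⟩
  · obtain ⟨x, hx1, hx2⟩ := hFF i₁ i₂
    exact ⟨Sum.inl x, memhat _ _ _ hx1, memhat _ _ _ hx2⟩

end
end

section
/- If C is a cover of H(T,S,F_1,…,F_r), then the set C' = (C ∪ {s_i : v_i ∈ C}) \ {v_1,…,v_r} is a cover of T − S, the hypergraph obtained from T by deleting the edge S. -/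
open Finset

noncomputable section
open scoped Classical

open Configuration

theorem statement_4 {V : Type*} {r : ℕ}
    (T : Set (Finset V)) (sides : Fin r → Set V)
    (hTint : Intersecting T) (hTuni : Uniform T r) (hTpart : Partite T sides)
    (s : Fin r → V) (hside : ∀ i, s i ∈ sides i)
    (S : Finset V) (hSdef : S = Finset.univ.image s) (hS : S ∈ T)
    (hSint : ∀ E ∈ T, E ≠ S → ∃! x, x ∈ E ∧ x ∈ S)
    (F : Fin r → Finset V) (hF : ∀ i, F i ∈ T) (hsF : ∀ i, s i ∈ F i)
    (hFF : ∀ i j, ∃ x, x ∈ (F i).erase (s i) ∧ x ∈ (F j).erase (s j))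
    (C : Set (V ⊕ Fin r)) (hC : IsCover C (constructionH T S s F)) :
    IsCover {x : V | Sum.inl x ∈ C ∨ ∃ i : Fin r, x = s i ∧ Sum.inr i ∈ C} (T \ {S}) := by
  intro E hE
  obtain ⟨hET, hES⟩ := hE
  simp only [Set.mem_singleton_iff] at hES
  -- find i with s i ∈ E
  obtain ⟨x, ⟨hxE, hxS⟩, -⟩ := hSint E hET hES
  rw [hSdef] at hxS
  obtain ⟨i, -, rfl⟩ := Finset.mem_image.mp hxS
  -- hatE E i is in the construction
  have hmem : hatE E i ∈ constructionH T S s F := by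
    left; left
    exact ⟨E, hET, hES, i, hxE, rfl⟩
  obtain ⟨v, hvC, hvE⟩ := hC _ hmem
  unfold hatE at hvE
  rcases Finset.mem_insert.mp hvE with rfl | hv
  · exact ⟨s i, Or.inr ⟨i, rfl, hvC⟩, hxE⟩
  · obtain ⟨y, hyE, rfl⟩ := Finset.mem_image.mp hv
    exact ⟨y, Or.inl hvC, hyE⟩

end
end

section
/- Assume additionally that τ(T − S) = r−1 and that the only covers of T − S of cardinality r−1 are the sides V_1,…,V_r. Then H(T,S,F_1,…,F_r) is an (r+1)-partite intersecting hypergraph (with sides V_1,…,V_r,V_{r+1}) in which every edge has size r or r+1, and its cover number satisfies τ(H(T,S,F_1,…,F_r)) = r. -/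
open Finset

noncomputable section
open scoped Classical

open Configuration

theorem statement_5 {V : Type*} {r : ℕ}
    (T : Set (Finset V)) (sides : Fin r → Set V)
    (hTint : Intersecting T) (hTuni : Uniform T r) (hTpart : Partite T sides)
    (s : Fin r → V) (hside : ∀ i, s i ∈ sides i)
    (S : Finset V) (hSdef : S = Finset.univ.image s) (hS : S ∈ T)
    (hSint : ∀ E ∈ T, E ≠ S → ∃! x, x ∈ E ∧ x ∈ S)
    (F : Fin r → Finset V) (hF : ∀ i, F i ∈ T) (hsF : ∀ i, s i ∈ F i)
    (hFF : ∀ i j, ∃ x, x ∈ (F i).erase (s i) ∧ x ∈ (F j).erase (s j))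
    (hτ : coverNumber (T \ {S}) = r - 1)
    (hcovers : ∀ C : Finset V, IsCover (↑C) (T \ {S}) → C.card = r - 1 →
      ∃ i, (C : Set V) = sides i) :
    Partite (constructionH T S s F) (extSides sides) ∧
    Intersecting (constructionH T S s F) ∧
    (∀ e ∈ constructionH T S s F, e.card = r ∨ e.card = r + 1) ∧
    coverNumber (constructionH T S s F) = r := by
  classical
  -- basic facts
  have sInj : Function.Injective s := by
    intro i j hij
    exact (hTpart.1 (s i)).unique (hside i) (by rw [hij]; exact hside j)
  have hsS : ∀ i, s i ∈ S := by
    intro i; rw [hSdef]; exact Finset.mem_image_of_mem s (Finset.mem_univ i)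
  have hSmem : ∀ x ∈ S, ∃ i, s i = x := by
    intro x hx; rw [hSdef] at hx
    simpa using Finset.mem_image.mp hx
  have hidx : ∀ E ∈ T, E ≠ S → ∀ i j, s i ∈ E → s j ∈ E → i = j := by
    intro E hE hne i j hi hj
    obtain ⟨x, hx, hxu⟩ := hSint E hE hne
    have h1 := hxu (s i) ⟨hi, hsS i⟩
    have h2 := hxu (s j) ⟨hj, hsS j⟩
    exact sInj (h1.trans h2.symm)
  have hFside : ∀ k, ∀ x ∈ F k, x ∈ sides k → x = s k := by
    intro k x hx hxk
    exact hTpart.2 (F k) (hF k) k x hx (s k) (hsF k) hxk (hside k)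
  -- membership in H
  have memH : ∀ e : Finset (V ⊕ Fin r), e ∈ constructionH T S s F ↔
      (∃ E ∈ T, E ≠ S ∧ ∃ i, s i ∈ E ∧ e = hatE E i) ∨
      (∃ i, e = (F i).image Sum.inl) ∨ (∃ i, e = hatE ((F i).erase (s i)) i) := by
    intro e
    simp only [constructionH, Set.mem_union, Set.mem_setOf_eq, or_assoc]
  have mem_hatE_inl : ∀ (A : Finset V) (i : Fin r) (x : V),
      Sum.inl x ∈ hatE A i ↔ x ∈ A := by
    intro A i x; simp [hatE]
  have mem_hatE_inr : ∀ (A : Finset V) (i j : Fin r),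
      Sum.inr j ∈ hatE A i ↔ j = i := by
    intro A i j; simp [hatE]
  -- the extended sides
  have extLast : extSides sides (Fin.last r) = Set.range Sum.inr := by
    simp [extSides]
  have extCast : ∀ i : Fin r, extSides sides i.castSucc = Sum.inl '' sides i := by
    intro i; simp [extSides]
  -- Part 1 : partite
  have hPart1 : ∀ v : V ⊕ Fin r, ∃! i, v ∈ extSides sides i := by
    intro v
    cases v with
    | inl x =>
      obtain ⟨i, hi, hiu⟩ := hTpart.1 x
      refine ⟨i.castSucc, ?_, ?_⟩
      · show Sum.inl x ∈ extSides sides i.castSucc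
        rw [extCast]; exact ⟨x, hi, rfl⟩
      · intro j hj
        induction j using Fin.lastCases with
        | last =>
          rw [extLast] at hj
          obtain ⟨k, hk⟩ := hj
          exact absurd hk (by simp)
        | cast j' =>
          rw [extCast] at hj
          obtain ⟨y, hy, hyx⟩ := hj
          have : y = x := Sum.inl_injective hyx
          subst this
          exact congrArg Fin.castSucc (hiu j' hy)
    | inr k =>
      refine ⟨Fin.last r, ?_, ?_⟩
      · show Sum.inr k ∈ extSides sides (Fin.last r)
        rw [extLast]; exact ⟨k, rfl⟩
      intro j hj
      induction j using Fin.lastCases with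
      | last => rfl
      | cast j' =>
        rw [extCast] at hj
        obtain ⟨y, _, h⟩ := hj
        exact absurd h (by simp)
  have hPart2 : ∀ e ∈ constructionH T S s F, ∀ i : Fin (r+1), ∀ x ∈ e, ∀ y ∈ e,
      x ∈ extSides sides i → y ∈ extSides sides i → x = y := by
    have key : ∀ (A : Finset V), (∃ E ∈ T, A ⊆ E) → ∀ (e : Finset (V ⊕ Fin r)),
        (e = A.image Sum.inl ∨ ∃ i', e = hatE A i') → ∀ i : Fin (r+1), ∀ x ∈ e, ∀ y ∈ e,
        x ∈ extSides sides i → y ∈ extSides sides i → x = y := by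
      rintro A ⟨E, hE, hAE⟩ e he i x hx y hy hxi hyi
      induction i using Fin.lastCases with
      | last =>
        rw [extLast] at hxi hyi
        obtain ⟨kx, hkx⟩ := hxi
        obtain ⟨ky, hky⟩ := hyi
        subst hkx; subst hky
        rcases he with rfl | ⟨i', rfl⟩
        · exact absurd hx (by simp)
        · rw [(mem_hatE_inr A i' kx).mp hx, (mem_hatE_inr A i' ky).mp hy]
      | cast j =>
        rw [extCast] at hxi hyi
        obtain ⟨a, ha, hax⟩ := hxi
        obtain ⟨b, hb, hby⟩ := hyi
        subst hax; subst hby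
        have haA : a ∈ A := by
          rcases he with rfl | ⟨i', rfl⟩
          · simpa using hx
          · exact (mem_hatE_inl A i' a).mp hx
        have hbA : b ∈ A := by
          rcases he with rfl | ⟨i', rfl⟩
          · simpa using hy
          · exact (mem_hatE_inl A i' b).mp hy
        exact congrArg Sum.inl (hTpart.2 E hE j a (hAE haA) b (hAE hbA) ha hb)
    intro e he
    rw [memH] at he
    rcases he with ⟨E, hE, hne, i', hsi', rfl⟩ | ⟨i', rfl⟩ | ⟨i', rfl⟩
    · exact key E ⟨E, hE, Finset.Subset.refl E⟩ _ (Or.inr ⟨i', rfl⟩)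
    · exact key (F i') ⟨F i', hF i', Finset.Subset.refl _⟩ _ (Or.inl rfl)
    · exact key ((F i').erase (s i')) ⟨F i', hF i', Finset.erase_subset _ _⟩ _ (Or.inr ⟨i', rfl⟩)
  -- key intersection fact
  have hEFj : ∀ E ∈ T, E ≠ S → ∀ i j : Fin r, s i ∈ E → i ≠ j →
      ∃ x, x ∈ E ∧ x ∈ (F j).erase (s j) := by
    intro E hE hne i j hsi hij
    obtain ⟨x, hxE, hxF⟩ := hTint E hE (F j) (hF j)
    refine ⟨x, hxE, Finset.mem_erase.mpr ⟨?_, hxF⟩⟩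
    intro hx
    exact hij (hidx E hE hne i j hsi (hx ▸ hxE))
  -- Part 2 : intersecting
  have hInt : Intersecting (constructionH T S s F) := by
    intro e₁ he₁ e₂ he₂
    rw [memH] at he₁ he₂
    rcases he₁ with ⟨E₁, hE₁, hne₁, i, hsi, rfl⟩ | ⟨i, rfl⟩ | ⟨i, rfl⟩ <;>
      rcases he₂ with ⟨E₂, hE₂, hne₂, j, hsj, rfl⟩ | ⟨j, rfl⟩ | ⟨j, rfl⟩
    · obtain ⟨x, hx1, hx2⟩ := hTint E₁ hE₁ E₂ hE₂
      exact ⟨Sum.inl x, (mem_hatE_inl _ _ _).mpr hx1, (mem_hatE_inl _ _ _).mpr hx2⟩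
    · obtain ⟨x, hx1, hx2⟩ := hTint E₁ hE₁ (F j) (hF j)
      exact ⟨Sum.inl x, (mem_hatE_inl _ _ _).mpr hx1, Finset.mem_image_of_mem _ hx2⟩
    · by_cases hij : i = j
      · subst hij
        exact ⟨Sum.inr i, (mem_hatE_inr _ _ _).mpr rfl, (mem_hatE_inr _ _ _).mpr rfl⟩
      · obtain ⟨x, hx1, hx2⟩ := hEFj E₁ hE₁ hne₁ i j hsi hij
        exact ⟨Sum.inl x, (mem_hatE_inl _ _ _).mpr hx1, (mem_hatE_inl _ _ _).mpr hx2⟩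
    · obtain ⟨x, hx1, hx2⟩ := hTint (F i) (hF i) E₂ hE₂
      exact ⟨Sum.inl x, Finset.mem_image_of_mem _ hx1, (mem_hatE_inl _ _ _).mpr hx2⟩
    · obtain ⟨x, hx1, hx2⟩ := hTint (F i) (hF i) (F j) (hF j)
      exact ⟨Sum.inl x, Finset.mem_image_of_mem _ hx1, Finset.mem_image_of_mem _ hx2⟩
    · obtain ⟨x, hx1, hx2⟩ := hFF i j
      exact ⟨Sum.inl x, Finset.mem_image_of_mem _ (Finset.mem_of_mem_erase hx1),
        (mem_hatE_inl _ _ _).mpr hx2⟩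
    · by_cases hij : j = i
      · subst hij
        exact ⟨Sum.inr j, (mem_hatE_inr _ _ _).mpr rfl, (mem_hatE_inr _ _ _).mpr rfl⟩
      · obtain ⟨x, hx1, hx2⟩ := hEFj E₂ hE₂ hne₂ j i hsj hij
        exact ⟨Sum.inl x, (mem_hatE_inl _ _ _).mpr hx2, (mem_hatE_inl _ _ _).mpr hx1⟩
    · obtain ⟨x, hx1, hx2⟩ := hFF i j
      exact ⟨Sum.inl x, (mem_hatE_inl _ _ _).mpr hx1,
        Finset.mem_image_of_mem _ (Finset.mem_of_mem_erase hx2)⟩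
    · obtain ⟨x, hx1, hx2⟩ := hFF i j
      exact ⟨Sum.inl x, (mem_hatE_inl _ _ _).mpr hx1, (mem_hatE_inl _ _ _).mpr hx2⟩
  -- Part 3 : sizes
  have card_hatE : ∀ (A : Finset V) (i : Fin r), (hatE A i).card = A.card + 1 := by
    intro A i
    rw [hatE, Finset.card_insert_of_notMem (by simp),
      Finset.card_image_of_injective _ Sum.inl_injective]
  have hSizes : ∀ e ∈ constructionH T S s F, e.card = r ∨ e.card = r + 1 := by
    intro e he
    rw [memH] at he
    rcases he with ⟨E, hE, hne, i, hsi, rfl⟩ | ⟨i, rfl⟩ | ⟨i, rfl⟩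
    · right; rw [card_hatE, hTuni E hE]
    · left; rw [Finset.card_image_of_injective _ Sum.inl_injective, hTuni (F i) (hF i)]
    · left
      rw [card_hatE, Finset.card_erase_of_mem (hsF i), hTuni (F i) (hF i)]
      have := i.pos
      omega
  -- Part 4 : cover number
  have hLB : ∀ C : Finset (V ⊕ Fin r), IsCover (↑C) (constructionH T S s F) → r ≤ C.card := by
    intro C hC
    by_contra hlt
    push_neg at hlt
    have hr : 0 < r := lt_of_le_of_lt (Nat.zero_le _) hlt
    set C₀ := C.toLeft with hC₀
    set C₁ := C.toRight with hC₁
    set D := C₀ ∪ C₁.image s with hDdef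
    have hDcov : IsCover (↑D) (T \ {S}) := by
      rintro E ⟨hE, hne⟩
      have hneS : E ≠ S := hne
      obtain ⟨x, ⟨hxE, hxS⟩, _⟩ := hSint E hE hneS
      obtain ⟨i, rfl⟩ := hSmem x hxS
      have hEdge : hatE E i ∈ constructionH T S s F :=
        (memH _).mpr (Or.inl ⟨E, hE, hneS, i, hxE, rfl⟩)
      obtain ⟨v, hvC, hve⟩ := hC _ hEdge
      cases v with
      | inl a =>
        refine ⟨a, ?_, (mem_hatE_inl E i a).mp hve⟩
        exact Finset.mem_coe.mpr (Finset.mem_union_left _ (Finset.mem_toLeft.mpr hvC))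
      | inr k =>
        have hki : k = i := (mem_hatE_inr E i k).mp hve
        subst hki
        refine ⟨s k, ?_, hxE⟩
        exact Finset.mem_coe.mpr (Finset.mem_union_right _
          (Finset.mem_image_of_mem s (Finset.mem_toRight.mpr hvC)))
    have hDcard_ge : r - 1 ≤ D.card := by
      have hmem : D.card ∈ {n | ∃ C : Finset V, IsCover (↑C) (T \ {S}) ∧ C.card = n} :=
        ⟨D, hDcov, rfl⟩
      calc r - 1 = coverNumber (T \ {S}) := hτ.symm
        _ ≤ D.card := Nat.sInf_le hmem
    have hDcard_le : D.card ≤ C.card := by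
      calc D.card ≤ C₀.card + (C₁.image s).card := Finset.card_union_le _ _
        _ ≤ C₀.card + C₁.card := by
            exact Nat.add_le_add_left Finset.card_image_le _
        _ = C.card := Finset.card_toLeft_add_card_toRight
    have hDcard : D.card = r - 1 := le_antisymm (by omega) hDcard_ge
    obtain ⟨k, hk⟩ := hcovers D hDcov hDcard
    have hsub : ∀ x ∈ C₀, x ∈ sides k := by
      intro x hx
      have : x ∈ (↑D : Set V) := Finset.mem_coe.mpr (Finset.mem_union_left _ hx)
      rwa [hk] at this
    have hE2 : (F k).image Sum.inl ∈ constructionH T S s F :=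
      (memH _).mpr (Or.inr (Or.inl ⟨k, rfl⟩))
    obtain ⟨v, hvC, hvE⟩ := hC _ hE2
    obtain ⟨a, haF, rfl⟩ := Finset.mem_image.mp hvE
    have haC₀ : a ∈ C₀ := Finset.mem_toLeft.mpr hvC
    have haS : a = s k := hFside k a haF (hsub a haC₀)
    subst haS
    have hE3 : hatE ((F k).erase (s k)) k ∈ constructionH T S s F :=
      (memH _).mpr (Or.inr (Or.inr ⟨k, rfl⟩))
    obtain ⟨w, hwC, hwE⟩ := hC _ hE3
    have hkC₁ : k ∈ C₁ := by
      cases w with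
      | inl b =>
        exfalso
        have hbF : b ∈ (F k).erase (s k) := (mem_hatE_inl _ _ _).mp hwE
        have hbC₀ : b ∈ C₀ := Finset.mem_toLeft.mpr hwC
        have : b = s k := hFside k b (Finset.mem_of_mem_erase hbF) (hsub b hbC₀)
        exact (Finset.mem_erase.mp hbF).1 this
      | inr k' =>
        have hkk : k' = k := (mem_hatE_inr _ _ _).mp hwE
        exact Finset.mem_toRight.mpr (hkk ▸ hwC)
    have hD2 : D ⊆ C₀ ∪ (C₁.erase k).image s := by
      intro x hx
      rcases Finset.mem_union.mp hx with h | h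
      · exact Finset.mem_union_left _ h
      · obtain ⟨j, hj, rfl⟩ := Finset.mem_image.mp h
        by_cases hjk : j = k
        · subst hjk; exact Finset.mem_union_left _ haC₀
        · exact Finset.mem_union_right _
            (Finset.mem_image_of_mem s (Finset.mem_erase.mpr ⟨hjk, hj⟩))
    have hDle : D.card ≤ C₀.card + (C₁.card - 1) := by
      calc D.card ≤ (C₀ ∪ (C₁.erase k).image s).card := Finset.card_le_card hD2
        _ ≤ C₀.card + ((C₁.erase k).image s).card := Finset.card_union_le _ _
        _ ≤ C₀.card + (C₁.erase k).card := Nat.add_le_add_left Finset.card_image_le _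
        _ = C₀.card + (C₁.card - 1) := by rw [Finset.card_erase_of_mem hkC₁]
    have hC₁pos : 1 ≤ C₁.card := Finset.card_pos.mpr ⟨k, hkC₁⟩
    have hsum : C₀.card + C₁.card = C.card := Finset.card_toLeft_add_card_toRight
    omega
  have hUB : ∃ C : Finset (V ⊕ Fin r), IsCover (↑C) (constructionH T S s F) ∧ C.card = r := by
    rcases Nat.eq_zero_or_pos r with hr | hr
    · refine ⟨∅, ?_, by simp [hr]⟩
      intro e he
      rw [memH] at he
      rcases he with ⟨E, _, _, i, _⟩ | ⟨i, _⟩ | ⟨i, _⟩ <;> exact absurd i.pos (by omega)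
    · set i₀ : Fin r := ⟨0, hr⟩ with hi₀
      refine ⟨insert (Sum.inr i₀) (((F i₀).erase (s i₀)).image Sum.inl), ?_, ?_⟩
      · intro e he
        rw [memH] at he
        rcases he with ⟨E, hE, hne, i, hsi, rfl⟩ | ⟨j, rfl⟩ | ⟨j, rfl⟩
        · by_cases hii : i = i₀
          · subst hii
            exact ⟨Sum.inr i₀, Finset.mem_coe.mpr (Finset.mem_insert_self _ _),
              (mem_hatE_inr _ _ _).mpr rfl⟩
          · obtain ⟨x, hxE, hxF⟩ := hEFj E hE hne i i₀ hsi hii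
            exact ⟨Sum.inl x, Finset.mem_coe.mpr
              (Finset.mem_insert_of_mem (Finset.mem_image_of_mem _ hxF)),
              (mem_hatE_inl _ _ _).mpr hxE⟩
        · obtain ⟨x, hxi, hxj⟩ := hFF i₀ j
          exact ⟨Sum.inl x, Finset.mem_coe.mpr
            (Finset.mem_insert_of_mem (Finset.mem_image_of_mem _ hxi)),
            Finset.mem_image_of_mem _ (Finset.mem_of_mem_erase hxj)⟩
        · obtain ⟨x, hxi, hxj⟩ := hFF i₀ j
          exact ⟨Sum.inl x, Finset.mem_coe.mpr
            (Finset.mem_insert_of_mem (Finset.mem_image_of_mem _ hxi)),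
            (mem_hatE_inl _ _ _).mpr hxj⟩
      · rw [Finset.card_insert_of_notMem (by simp),
          Finset.card_image_of_injective _ Sum.inl_injective,
          Finset.card_erase_of_mem (hsF i₀), hTuni (F i₀) (hF i₀)]
        omega
  have hcov : coverNumber (constructionH T S s F) = r := by
    obtain ⟨C, hCcov, hCcard⟩ := hUB
    unfold coverNumber
    apply le_antisymm
    · exact Nat.sInf_le ⟨C, hCcov, hCcard⟩
    · apply le_csInf
      · exact ⟨r, C, hCcov, hCcard⟩
      · rintro n ⟨C', hC', rfl⟩
        exact hLB C' hC'
  exact ⟨⟨hPart1, hPart2⟩, hInt, hSizes, hcov⟩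

end
end

section
/- Let r ≥ 4 and let T_r be a truncated projective plane of uniformity r with sides V_1,…,V_r. Let S = {s_1,…,s_r} be an edge of T_r with s_i ∈ V_i, and let F_1,…,F_r and G_1,…,G_r be edges of T_r with S ∩ F_i = {s_i} = S ∩ G_i for each i. If there is a subhypergraph H_F of H(T_r,S,F_1,…,F_r) with cover number τ(H_F) = r which is isomorphic to a subhypergraph H_G of H(T_r,S,G_1,…,G_r) with cover number τ(H_G) = r, then S(T_r,S,F_1,…,F_r) is isomorphic to S(T_r,S,G_1,…,G_r). -/
open Finset

noncomputable section
open scoped Classical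

open Configuration

section Aux

open Configuration

variable {P L : Type*} [Membership P L] [Fintype P] [Fintype L]
  [Configuration.ProjectivePlane P L]

lemma mem_linePoints {w : P} {ℓ : L} {p : {p : P // p ≠ w}} :
    p ∈ linePoints w ℓ ↔ (p : P) ∈ ℓ := by
  simp [linePoints]

lemma card_linePoints_of_not_mem {w : P} {ℓ : L} (h : w ∉ ℓ) :
    (linePoints w ℓ).card = Configuration.ProjectivePlane.order P L + 1 := by
  have hb : (linePoints w ℓ).card = (Finset.univ.filter (fun p : P => p ∈ ℓ)).card := by
    refine Finset.card_bij (fun p _ => (p : P)) ?_ ?_ ?_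
    · intro a ha
      simp only [Finset.mem_filter, Finset.mem_univ, true_and]
      exact mem_linePoints.1 ha
    · intro a _ b _ hab
      exact Subtype.ext hab
    · intro b hb
      simp only [Finset.mem_filter, Finset.mem_univ, true_and] at hb
      have hbw : b ≠ w := fun h' => h (h' ▸ hb)
      exact ⟨⟨b, hbw⟩, mem_linePoints.2 hb, rfl⟩
  rw [hb, ← Fintype.card_subtype, ← Nat.card_eq_fintype_card]
  exact Configuration.ProjectivePlane.pointCount_eq P ℓ

lemma card_linePoints_of_mem {w : P} {ℓ : L} (h : w ∈ ℓ) :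
    (linePoints w ℓ).card = Configuration.ProjectivePlane.order P L := by
  have himg : (linePoints w ℓ).image (Subtype.val) =
      (Finset.univ.filter (fun p : P => p ∈ ℓ)).erase w := by
    ext b
    simp only [Finset.mem_image, Finset.mem_erase, Finset.mem_filter, Finset.mem_univ, true_and]
    constructor
    · rintro ⟨p, hp, rfl⟩
      exact ⟨p.2, mem_linePoints.1 hp⟩
    · rintro ⟨hbw, hbl⟩
      exact ⟨⟨b, hbw⟩, mem_linePoints.2 hbl, rfl⟩
  have h1 : ((linePoints w ℓ).image (Subtype.val)).card = (linePoints w ℓ).card :=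
    Finset.card_image_of_injective _ Subtype.val_injective
  have h2 : (Finset.univ.filter (fun p : P => p ∈ ℓ)).card =
      Configuration.ProjectivePlane.order P L + 1 := by
    rw [← Fintype.card_subtype, ← Nat.card_eq_fintype_card]
    exact Configuration.ProjectivePlane.pointCount_eq P ℓ
  have hw : w ∈ Finset.univ.filter (fun p : P => p ∈ ℓ) := by
    simp [h]
  have h3 := Finset.card_erase_of_mem hw
  rw [himg] at h1
  omega

/-- A truncated edge meets a line through `w` in a unique point. -/
lemma exists_meet {w : P} {E : Finset {p : P // p ≠ w}} (hE : E ∈ truncatedPP P L w)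
    (ℓ' : L) (hw : w ∈ ℓ') :
    ∃ p, p ∈ E ∧ (p : P) ∈ ℓ' ∧ ∀ q ∈ E, (q : P) ∈ ℓ' → q = p := by
  obtain ⟨ℓ, hwℓ, rfl⟩ := hE
  have hne : ℓ' ≠ ℓ := fun h => hwℓ (h ▸ hw)
  obtain ⟨p, ⟨hp1, hp2⟩, hup⟩ := Configuration.HasPoints.existsUnique_point P L ℓ' ℓ hne
  have hpw : p ≠ w := fun h => hwℓ (h ▸ hp2)
  refine ⟨⟨p, hpw⟩, mem_linePoints.2 hp2, hp1, ?_⟩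
  intro q hq hq'
  exact Subtype.ext (hup (q : P) ⟨hq', mem_linePoints.1 hq⟩)

/-- Two truncated edges sharing two distinct points are equal. -/
lemma eq_of_two_mem {w : P} {E E' : Finset {p : P // p ≠ w}}
    (hE : E ∈ truncatedPP P L w) (hE' : E' ∈ truncatedPP P L w)
    {a b : {p : P // p ≠ w}} (hab : a ≠ b)
    (haE : a ∈ E) (hbE : b ∈ E) (haE' : a ∈ E') (hbE' : b ∈ E') : E = E' := by
  obtain ⟨ℓ, hwℓ, rfl⟩ := hE
  obtain ⟨ℓ', hwℓ', rfl⟩ := hE'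
  have := Configuration.Nondegenerate.eq_or_eq (P := P) (L := L)
    (mem_linePoints.1 haE) (mem_linePoints.1 hbE)
    (mem_linePoints.1 haE') (mem_linePoints.1 hbE')
  rcases this with h | h
  · exact absurd (Subtype.ext h) hab
  · rw [h]

lemma inr_not_mem_image_inl {V : Type*} {r : ℕ} (E : Finset V) (i : Fin r) :
    (Sum.inr i : V ⊕ Fin r) ∉ E.image Sum.inl := by
  simp

lemma card_hatE {V : Type*} {r : ℕ} (E : Finset V) (i : Fin r) :
    (hatE E i).card = E.card + 1 := by
  rw [hatE, Finset.card_insert_of_notMem (inr_not_mem_image_inl E i),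
    Finset.card_image_of_injective _ Sum.inl_injective]


lemma mem_hatE_inl {V : Type*} {r : ℕ} {E : Finset V} {i : Fin r} {p : V} :
    (Sum.inl p : V ⊕ Fin r) ∈ hatE E i ↔ p ∈ E := by
  simp [hatE]

lemma mem_hatE_inr {V : Type*} {r : ℕ} {E : Finset V} {i j : Fin r} :
    (Sum.inr j : V ⊕ Fin r) ∈ hatE E i ↔ j = i := by
  simp [hatE]

lemma mem_image_inl' {V : Type*} {r : ℕ} {E : Finset V} {p : V} :
    (Sum.inl p : V ⊕ Fin r) ∈ E.image Sum.inl ↔ p ∈ E := by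
  simp

lemma mem_erase_classical {V : Type*} {E : Finset V} {a p : V} :
    p ∈ E.erase a ↔ p ≠ a ∧ p ∈ E := Finset.mem_erase


lemma card_image_inl {V : Type*} {r : ℕ} (E : Finset V) :
    (E.image (Sum.inl : V → V ⊕ Fin r)).card = E.card :=
  Finset.card_image_of_injective _ Sum.inl_injective

lemma card_erase_classical {V : Type*} (E : Finset V) (a : V) (h : a ∈ E) :
    (E.erase a).card = E.card - 1 :=
  Finset.card_erase_of_mem h

lemma card_image_equiv {V W : Type*} (φ : V ≃ W) (e : Finset V) :
    (e.image φ).card = e.card :=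
  Finset.card_image_of_injective _ φ.injective

lemma coverNumber_le_of_cover {V : Type*} {H : Set (Finset V)} (C : Finset V)
    (hC : IsCover (↑C) H) : coverNumber H ≤ C.card :=
  Nat.sInf_le ⟨C, hC, rfl⟩

end Aux

section Main

open Configuration

variable {P L : Type*} [Membership P L] [Fintype P] [Fintype L]
  [Configuration.ProjectivePlane P L] {r : ℕ}

/-- The main criticality lemma: a subhypergraph with cover number `r` contains `E2 ∪ E3`. -/
lemma constructionS_subset_of_coverNumber {r : ℕ} (hr : 4 ≤ r)
    (horder : Configuration.ProjectivePlane.order P L = r - 1) (w : P)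
    (m : Fin r → L) (hm : EnumeratesLinesThrough w m)
    (s : Fin r → {p : P // p ≠ w}) (hside : ∀ i, ((s i : P) ∈ m i))
    (hS : Finset.univ.image s ∈ truncatedPP P L w)
    (F : Fin r → Finset {p : P // p ≠ w})
    (hF : ∀ i, F i ∈ truncatedPP P L w)
    (hSF : ∀ i, Finset.univ.image s ∩ F i = {s i})
    (HF : Set (Finset ({p : P // p ≠ w} ⊕ Fin r)))
    (hHF : HF ⊆ constructionH (truncatedPP P L w) (Finset.univ.image s) s F)
    (hτF : coverNumber HF = r) :
    constructionS s F ⊆ HF := by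
  obtain ⟨hminj, hwm, -⟩ := hm
  -- sides are disjoint
  have hdisj : ∀ (i j : Fin r), i ≠ j → ∀ p : {p : P // p ≠ w},
      (p : P) ∈ m i → (p : P) ∈ m j → False := by
    intro i j hij p hpi hpj
    rcases Configuration.Nondegenerate.eq_or_eq (P := P) (L := L)
      hpi (hwm i) hpj (hwm j) with h | h
    · exact p.2 h
    · exact hij (hminj h)
  have hsinj : ∀ i j : Fin r, s i = s j → i = j := by
    intro i j hij
    by_contra hne
    exact hdisj i j hne (s i) (hside i) (hij ▸ hside j)
  have hsS : ∀ i, s i ∈ Finset.univ.image s := fun i =>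
    Finset.mem_image_of_mem s (Finset.mem_univ i)
  have hsF : ∀ i, s i ∈ F i := by
    intro i
    have : s i ∈ Finset.univ.image s ∩ F i := by rw [hSF i]; exact Finset.mem_singleton_self _
    exact (Finset.mem_inter.1 this).2
  -- the two covers
  intro e he
  by_contra heHF
  have hHF' : ∀ e' ∈ HF, e' ∈ constructionH (truncatedPP P L w) (Finset.univ.image s) s F
      ∧ e' ≠ e := fun e' he' => ⟨hHF he', fun h => heHF (h ▸ he')⟩
  rcases he with ⟨i, rfl⟩ | ⟨i, rfl⟩
  · -- e = (F i).image inl ; cover C1 = {v_i} ∪ (V_i \ {s i})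
    set C1 : Finset ({p : P // p ≠ w} ⊕ Fin r) :=
      insert (Sum.inr i) (((linePoints w (m i)).erase (s i)).image Sum.inl) with hC1
    have hcov : IsCover (↑C1) HF := by
      intro e' he'
      obtain ⟨hmem, hne⟩ := hHF' e' he'
      have hC1m : ∀ p : {p : P // p ≠ w}, p ≠ s i → (p : P) ∈ m i →
          (Sum.inl p : {p : P // p ≠ w} ⊕ Fin r) ∈ (↑C1 : Set _) := by
        intro p h1 h2
        rw [Finset.mem_coe, hC1]
        exact Finset.mem_insert_of_mem
          (Finset.mem_image_of_mem _ (Finset.mem_erase.2 ⟨h1, mem_linePoints.2 h2⟩))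
      have hC1v : (Sum.inr i : {p : P // p ≠ w} ⊕ Fin r) ∈ (↑C1 : Set _) := by
        rw [Finset.mem_coe, hC1]; exact Finset.mem_insert_self _ _
      rcases hmem with (⟨E, hET, hES, j, hsjE, rfl⟩ | ⟨j, rfl⟩) | ⟨j, rfl⟩
      · -- E1 edges
        by_cases hji : j = i
        · subst hji
          exact ⟨Sum.inr j, hC1v, mem_hatE_inr.2 rfl⟩
        · obtain ⟨p, hpE, hpm, -⟩ := exists_meet hET (m i) (hwm i)
          have hpsi : p ≠ s i := by
            intro hpe
            have hsiE : s i ∈ E := hpe ▸ hpE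
            have hne2 : s j ≠ s i := fun h => hji (hsinj j i h)
            exact hES (eq_of_two_mem hET hS hne2 hsjE hsiE (hsS j) (hsS i))
          exact ⟨Sum.inl p, hC1m p hpsi hpm, mem_hatE_inl.2 hpE⟩
      · -- E2 edges
        have hji : j ≠ i := by rintro rfl; exact hne rfl
        obtain ⟨p, hpE, hpm, -⟩ := exists_meet (hF j) (m i) (hwm i)
        have hpsi : p ≠ s i := by
          rintro rfl
          have : s i ∈ Finset.univ.image s ∩ F j := Finset.mem_inter.2 ⟨hsS i, hpE⟩
          rw [hSF j, Finset.mem_singleton] at this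
          exact hji (hsinj j i (this.symm) ▸ rfl)
        exact ⟨Sum.inl p, hC1m p hpsi hpm, mem_image_inl'.2 hpE⟩
      · -- E3 edges
        by_cases hji : j = i
        · subst hji
          exact ⟨Sum.inr j, hC1v, mem_hatE_inr.2 rfl⟩
        · obtain ⟨p, hpE, hpm, -⟩ := exists_meet (hF j) (m i) (hwm i)
          have hpsi : p ≠ s i := by
            rintro rfl
            have : s i ∈ Finset.univ.image s ∩ F j := Finset.mem_inter.2 ⟨hsS i, hpE⟩
            rw [hSF j, Finset.mem_singleton] at this
            exact hji (hsinj j i (this.symm) ▸ rfl)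
          have hpsj : p ≠ s j := by
            rintro rfl
            exact hdisj i j (Ne.symm hji) (s j) hpm (hside j)
          exact ⟨Sum.inl p, hC1m p hpsi hpm,
            mem_hatE_inl.2 (mem_erase_classical.2 ⟨hpsj, hpE⟩)⟩
    have hcard : C1.card ≤ r - 1 := by
      have h1 : (linePoints w (m i)).card = r - 1 := by
        rw [card_linePoints_of_mem (hwm i), horder]
      have h2 := Finset.card_erase_of_mem (mem_linePoints.2 (hside i))
      have h3 : (((linePoints w (m i)).erase (s i)).image
          (Sum.inl : _ → {p : P // p ≠ w} ⊕ Fin r)).card =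
          ((linePoints w (m i)).erase (s i)).card :=
        Finset.card_image_of_injective _ Sum.inl_injective
      have h4 := Finset.card_insert_le (Sum.inr i : {p : P // p ≠ w} ⊕ Fin r)
        (((linePoints w (m i)).erase (s i)).image Sum.inl)
      rw [hC1]
      omega
    have := coverNumber_le_of_cover C1 hcov
    omega
  · -- e = hatE ((F i).erase (s i)) i ; cover C2 = V_i
    set C2 : Finset ({p : P // p ≠ w} ⊕ Fin r) := (linePoints w (m i)).image Sum.inl with hC2
    have hcov : IsCover (↑C2) HF := by
      intro e' he'
      obtain ⟨hmem, hne⟩ := hHF' e' he'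
      have hC2m : ∀ p : {p : P // p ≠ w}, (p : P) ∈ m i →
          (Sum.inl p : {p : P // p ≠ w} ⊕ Fin r) ∈ (↑C2 : Set _) := by
        intro p h2
        rw [Finset.mem_coe, hC2]
        exact Finset.mem_image_of_mem _ (mem_linePoints.2 h2)
      rcases hmem with (⟨E, hET, hES, j, hsjE, rfl⟩ | ⟨j, rfl⟩) | ⟨j, rfl⟩
      · obtain ⟨p, hpE, hpm, -⟩ := exists_meet hET (m i) (hwm i)
        exact ⟨Sum.inl p, hC2m p hpm, mem_hatE_inl.2 hpE⟩
      · obtain ⟨p, hpE, hpm, -⟩ := exists_meet (hF j) (m i) (hwm i)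
        exact ⟨Sum.inl p, hC2m p hpm, mem_image_inl'.2 hpE⟩
      · have hji : j ≠ i := by rintro rfl; exact hne rfl
        obtain ⟨p, hpE, hpm, -⟩ := exists_meet (hF j) (m i) (hwm i)
        have hpsj : p ≠ s j := by
          rintro rfl
          exact hdisj i j (Ne.symm hji) (s j) hpm (hside j)
        exact ⟨Sum.inl p, hC2m p hpm,
          mem_hatE_inl.2 (mem_erase_classical.2 ⟨hpsj, hpE⟩)⟩
    have hcard : C2.card ≤ r - 1 := by
      have h1 : (linePoints w (m i)).card = r - 1 := by
        rw [card_linePoints_of_mem (hwm i), horder]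
      have h3 : C2.card = (linePoints w (m i)).card :=
        Finset.card_image_of_injective _ Sum.inl_injective
      omega
    have := coverNumber_le_of_cover C2 hcov
    omega

/-- Cardinality classification of edges of `constructionH`. -/
lemma mem_constructionS_of_card {r : ℕ} (hr : 4 ≤ r)
    (horder : Configuration.ProjectivePlane.order P L = r - 1) (w : P)
    (s : Fin r → {p : P // p ≠ w})
    (F : Fin r → Finset {p : P // p ≠ w})
    {e : Finset ({p : P // p ≠ w} ⊕ Fin r)}
    (he : e ∈ constructionH (truncatedPP P L w) (Finset.univ.image s) s F)
    (hcard : e.card = r) : e ∈ constructionS s F := by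
  rcases he with (⟨E, hET, -, j, -, rfl⟩ | ⟨j, rfl⟩) | ⟨j, rfl⟩
  · exfalso
    obtain ⟨ℓ, hwℓ, rfl⟩ := hET
    have h1 := card_linePoints_of_not_mem (L := L) hwℓ
    have h2 := card_hatE (linePoints w ℓ) j
    omega
  · exact Or.inl ⟨j, rfl⟩
  · exact Or.inr ⟨j, rfl⟩

lemma card_of_mem_constructionS {r : ℕ} (hr : 4 ≤ r)
    (horder : Configuration.ProjectivePlane.order P L = r - 1) (w : P)
    (s : Fin r → {p : P // p ≠ w})
    (F : Fin r → Finset {p : P // p ≠ w})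
    (hF : ∀ i, F i ∈ truncatedPP P L w)
    (hSF : ∀ i, Finset.univ.image s ∩ F i = {s i})
    {e : Finset ({p : P // p ≠ w} ⊕ Fin r)}
    (he : e ∈ constructionS s F) : e.card = r := by
  have hsF : ∀ i, s i ∈ F i := by
    intro i
    have : s i ∈ Finset.univ.image s ∩ F i := by
      rw [hSF i]; exact Finset.mem_singleton_self _
    exact (Finset.mem_inter.1 this).2
  have hcardF : ∀ i, (F i).card = r := by
    intro i
    obtain ⟨ℓ, hwℓ, hFi⟩ := hF i
    rw [hFi, card_linePoints_of_not_mem hwℓ, horder]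
    omega
  rcases he with ⟨i, rfl⟩ | ⟨i, rfl⟩
  · rw [card_image_inl]
    exact hcardF i
  · rw [card_hatE, card_erase_classical _ _ (hsF i), hcardF i]
    omega

end Main


theorem statement_6 {P L : Type*} [Membership P L] [Fintype P] [Fintype L]
    [Configuration.ProjectivePlane P L] {r : ℕ} (hr : 4 ≤ r)
    (horder : Configuration.ProjectivePlane.order P L = r - 1) (w : P)
    (m : Fin r → L) (hm : EnumeratesLinesThrough w m)
    (s : Fin r → {p : P // p ≠ w}) (hside : ∀ i, ((s i : P) ∈ m i))
    (hS : Finset.univ.image s ∈ truncatedPP P L w)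
    (F G : Fin r → Finset {p : P // p ≠ w})
    (hF : ∀ i, F i ∈ truncatedPP P L w) (hG : ∀ i, G i ∈ truncatedPP P L w)
    (hSF : ∀ i, Finset.univ.image s ∩ F i = {s i})
    (hSG : ∀ i, Finset.univ.image s ∩ G i = {s i})
    (HF HG : Set (Finset ({p : P // p ≠ w} ⊕ Fin r)))
    (hHF : HF ⊆ constructionH (truncatedPP P L w) (Finset.univ.image s) s F)
    (hHG : HG ⊆ constructionH (truncatedPP P L w) (Finset.univ.image s) s G)
    (hτF : coverNumber HF = r) (hτG : coverNumber HG = r)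
    (hiso : Isomorphic HF HG) :
    Isomorphic (constructionS s F) (constructionS s G) := by
  obtain ⟨φ, hφ⟩ := hiso
  have hsubF := constructionS_subset_of_coverNumber hr horder w m hm s hside hS F hF hSF HF hHF hτF
  have hsubG := constructionS_subset_of_coverNumber hr horder w m hm s hside hS G hG hSG HG hHG hτG
  refine ⟨φ, fun e => ?_⟩
  constructor
  · intro he
    have he2 := (hφ e).1 (hsubF he)
    refine mem_constructionS_of_card hr horder w s G (hHG he2) ?_
    rw [card_image_equiv]
    exact card_of_mem_constructionS hr horder w s F hF hSF he
  · intro he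
    have he1 := (hφ e).2 (hsubG he)
    refine mem_constructionS_of_card hr horder w s F (hHF he1) ?_
    have h := card_of_mem_constructionS hr horder w s G hG hSG he
    rwa [card_image_equiv] at h


end
end

section
/- Let r ≥ 2 and suppose a projective plane of order r−1 exists. Then the truncated projective plane T_r (obtained by deleting a point w and all lines through w) is an r-partite r-uniform intersecting hypergraph with sides V_1,…,V_r, and its cover number is τ(T_r) = r−1. -/
open Finset

noncomputable section
open scoped Classical

open Configuration

section Helpers

variable {P L : Type*} [Membership P L] [Fintype P]

lemma linePoints_image (w : P) (ℓ : L) :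
    (linePoints w ℓ).image Subtype.val = (Finset.univ.filter (· ∈ ℓ)).erase w := by
  ext p
  simp only [linePoints, Finset.mem_image, Finset.mem_filter, Finset.mem_univ, true_and,
    Finset.mem_erase, Subtype.exists, exists_and_left, exists_prop, exists_eq_right_right]
  tauto

lemma card_linePoints_of_not_mem_s10 (w : P) (ℓ : L) (hw : w ∉ ℓ) :
    (linePoints w ℓ).card = (Finset.univ.filter (· ∈ ℓ) : Finset P).card := by
  rw [← Finset.card_image_of_injective _ Subtype.val_injective, linePoints_image,
    Finset.erase_eq_of_notMem (by simp [hw])]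

lemma card_linePoints_of_mem_s10 (w : P) (ℓ : L) (hw : w ∈ ℓ) :
    (linePoints w ℓ).card = (Finset.univ.filter (· ∈ ℓ) : Finset P).card - 1 := by
  rw [← Finset.card_image_of_injective _ Subtype.val_injective, linePoints_image,
    Finset.card_erase_of_mem (by simp [hw])]

lemma card_filter_line [Fintype L] [Configuration.ProjectivePlane P L] (ℓ : L) :
    (Finset.univ.filter (· ∈ ℓ) : Finset P).card = Configuration.ProjectivePlane.order P L + 1 := by
  rw [← Fintype.card_subtype, ← Nat.card_eq_fintype_card]
  exact Configuration.ProjectivePlane.pointCount_eq P ℓ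

lemma card_filter_point [Fintype L] [Configuration.ProjectivePlane P L] (p : P) :
    (Finset.univ.filter (p ∈ ·) : Finset L).card = Configuration.ProjectivePlane.order P L + 1 := by
  rw [← Fintype.card_subtype, ← Nat.card_eq_fintype_card]
  exact Configuration.ProjectivePlane.lineCount_eq L p

end Helpers

theorem statement_10 {P L : Type*} [Membership P L] [Fintype P] [Fintype L]
    [Configuration.ProjectivePlane P L] {r : ℕ} (hr : 2 ≤ r)
    (horder : Configuration.ProjectivePlane.order P L = r - 1) (w : P) :
    Uniform (truncatedPP P L w) r ∧
    Intersecting (truncatedPP P L w) ∧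
    (∃ m : Fin r → L, EnumeratesLinesThrough w m ∧
      Partite (truncatedPP P L w) (ppSide w m)) ∧
    coverNumber (truncatedPP P L w) = r - 1 := by
  classical
  set q := Configuration.ProjectivePlane.order P L with hq
  have hq1 : 1 ≤ q := le_of_lt (Configuration.ProjectivePlane.one_lt_order P L)
  have hrq : r = q + 1 := by omega
  -- Uniformity
  have huni : Uniform (truncatedPP P L w) r := by
    rintro e ⟨ℓ, hwℓ, rfl⟩
    rw [card_linePoints_of_not_mem_s10 w ℓ hwℓ, card_filter_line, hrq]
  -- Intersecting
  have hint : Intersecting (truncatedPP P L w) := by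
    rintro e₁ ⟨ℓ₁, hw₁, rfl⟩ e₂ ⟨ℓ₂, hw₂, rfl⟩
    by_cases h : ℓ₁ = ℓ₂
    · subst h
      have hcard : (linePoints w ℓ₁ : Finset {p : P // p ≠ w}).card = r :=
        huni _ ⟨ℓ₁, hw₁, rfl⟩
      have : (linePoints w ℓ₁ : Finset {p : P // p ≠ w}).Nonempty := by
        rw [← Finset.card_pos, hcard]; omega
      obtain ⟨v, hv⟩ := this
      exact ⟨v, hv, hv⟩
    · obtain ⟨hp₁, hp₂⟩ := Configuration.HasPoints.mkPoint_ax (P := P) h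
      have hne : Configuration.HasPoints.mkPoint (P := P) h ≠ w := fun he => hw₁ (he ▸ hp₁)
      exact ⟨⟨_, hne⟩, by simp [linePoints, hp₁], by simp [linePoints, hp₂]⟩
  -- Enumeration of lines through w
  have hcardlines : Fintype.card {ℓ : L // w ∈ ℓ} = r := by
    have h := Configuration.ProjectivePlane.lineCount_eq L w
    rw [← Nat.card_eq_fintype_card]
    exact h.trans (by omega)
  obtain ⟨eqv⟩ : Nonempty (Fin r ≃ {ℓ : L // w ∈ ℓ}) :=
    ⟨(Fintype.equivFinOfCardEq hcardlines).symm⟩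
  set m : Fin r → L := fun i => (eqv i).1 with hm
  have hmw : ∀ i, w ∈ m i := fun i => (eqv i).2
  have hminj : Function.Injective m :=
    fun i j hij => eqv.injective (Subtype.ext hij)
  have hmsurj : ∀ ℓ : L, w ∈ ℓ → ∃ i, m i = ℓ := by
    intro ℓ hℓ
    exact ⟨eqv.symm ⟨ℓ, hℓ⟩, congrArg Subtype.val (eqv.apply_symm_apply ⟨ℓ, hℓ⟩)⟩
  have henum : EnumeratesLinesThrough w m := ⟨hminj, hmw, hmsurj⟩
  have hpartite : Partite (truncatedPP P L w) (ppSide w m) := by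
    constructor
    · intro v
      obtain ⟨hv1, hv2⟩ := Configuration.HasLines.mkLine_ax (P := P) (L := L) v.2
      obtain ⟨i, hi⟩ := hmsurj _ hv2
      refine ⟨i, by simpa [ppSide, hi] using hv1, ?_⟩
      intro j hj
      by_contra hne
      have hmne : m j ≠ m i := fun h => hne (hminj h)
      have := Configuration.Nondegenerate.eq_or_eq (P := P) (l₁ := m j) (l₂ := m i)
        hj (hmw j) (hi ▸ hv1) (hmw i)
      exact v.2 (this.resolve_right hmne)
    · rintro e ⟨ℓ, hwℓ, rfl⟩ i x hx y hy hxi hyi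
      have hxℓ : (x : P) ∈ ℓ := by simpa [linePoints] using hx
      have hyℓ : (y : P) ∈ ℓ := by simpa [linePoints] using hy
      have hℓne : ℓ ≠ m i := fun h => hwℓ (h ▸ hmw i)
      have := Configuration.Nondegenerate.eq_or_eq (P := P) (l₁ := ℓ) (l₂ := m i)
        hxℓ hyℓ hxi hyi
      exact Subtype.ext (this.resolve_right hℓne)
  refine ⟨huni, hint, ⟨m, henum, hpartite⟩, ?_⟩
  -- Cover number
  have hr0 : 0 < r := by omega
  -- the cover: points of m 0 other than w
  have hcover : IsCover (↑(linePoints w (m ⟨0, hr0⟩)) : Set {p : P // p ≠ w})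
      (truncatedPP P L w) := by
    rintro e ⟨ℓ, hwℓ, rfl⟩
    have hℓne : ℓ ≠ m ⟨0, hr0⟩ := fun h => hwℓ (h ▸ hmw _)
    obtain ⟨hp₁, hp₂⟩ := Configuration.HasPoints.mkPoint_ax (P := P) hℓne
    have hne : Configuration.HasPoints.mkPoint (P := P) hℓne ≠ w := fun he => hwℓ (he ▸ hp₁)
    exact ⟨⟨_, hne⟩, by simp [linePoints, hp₂], by simp [linePoints, hp₁]⟩
  have hcovcard : (linePoints w (m ⟨0, hr0⟩)).card = q := by
    rw [card_linePoints_of_mem_s10 w _ (hmw _), card_filter_line]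
    omega
  -- lower bound: every cover has at least q elements
  have hlb : ∀ n ∈ {n | ∃ C : Finset {p : P // p ≠ w},
      IsCover (↑C) (truncatedPP P L w) ∧ C.card = n}, q ≤ n := by
    rintro n ⟨C, hC, rfl⟩
    by_contra hlt
    push_neg at hlt
    have hsub : (Finset.univ : Finset L) ⊆
        (Finset.univ.filter (w ∈ ·)) ∪ C.biUnion (fun p => Finset.univ.filter ((p : P) ∈ ·)) := by
      intro ℓ _
      by_cases hwl : w ∈ ℓ
      · exact Finset.mem_union_left _ (by simpa using hwl)
      · obtain ⟨v, hvC, hve⟩ := hC _ ⟨ℓ, hwl, rfl⟩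
        have : (v : P) ∈ ℓ := by simpa [linePoints] using hve
        exact Finset.mem_union_right _ (Finset.mem_biUnion.mpr ⟨v, hvC, by simpa using this⟩)
    have hcount : Fintype.card L ≤ (q + 1) + C.card * (q + 1) := by
      calc Fintype.card L = (Finset.univ : Finset L).card := (Finset.card_univ).symm
        _ ≤ ((Finset.univ.filter (w ∈ ·)) ∪
              C.biUnion (fun p => Finset.univ.filter ((p : P) ∈ ·))).card :=
            Finset.card_le_card hsub
        _ ≤ (Finset.univ.filter (w ∈ ·)).card +
              (C.biUnion (fun p => Finset.univ.filter ((p : P) ∈ ·))).card :=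
            Finset.card_union_le _ _
        _ ≤ (q + 1) + C.card * (q + 1) := by
            gcongr
            · rw [card_filter_point]
            · calc (C.biUnion (fun p => Finset.univ.filter ((p : P) ∈ ·))).card
                  ≤ ∑ p ∈ C, (Finset.univ.filter ((p : P) ∈ ·)).card :=
                    Finset.card_biUnion_le
                _ = C.card * (q + 1) :=
                    Finset.sum_const_nat (fun p _ => card_filter_point (p : P))
    rw [Configuration.ProjectivePlane.card_lines P L, ← hq] at hcount
    nlinarith [hcount, hlt]
  have hmem : q ∈ {n | ∃ C : Finset {p : P // p ≠ w},
      IsCover (↑C) (truncatedPP P L w) ∧ C.card = n} :=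
    ⟨linePoints w (m ⟨0, hr0⟩), hcover, hcovcard⟩
  rw [show r - 1 = q by omega]
  unfold coverNumber
  exact le_antisymm (Nat.sInf_le hmem) (le_csInf ⟨q, hmem⟩ hlb)


end
end

section
/- Let r ≥ 4, let T_r be a truncated projective plane of uniformity r with sides V_1,…,V_r, let S = {s_1,…,s_r} be an edge of T_r with s_i ∈ V_i, and let F_1,…,F_r be edges of T_r with S ∩ F_i = {s_i}. If H' is a subhypergraph of H(T_r,S,F_1,…,F_r) with cover number τ(H') = r, then H' contains all 2r edges of S(T_r,S,F_1,…,F_r), i.e., every edge F_i and every edge (F_i \ {s_i}) ∪ {v_i} for i = 1,…,r. -/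
open Finset

noncomputable section
open scoped Classical

open Configuration

theorem statement_14 {P L : Type*} [Membership P L] [Fintype P] [Fintype L]
    [Configuration.ProjectivePlane P L] {r : ℕ} (hr : 4 ≤ r)
    (horder : Configuration.ProjectivePlane.order P L = r - 1) (w : P)
    (m : Fin r → L) (hm : EnumeratesLinesThrough w m)
    (s : Fin r → {p : P // p ≠ w}) (hside : ∀ i, ((s i : P) ∈ m i))
    (hS : Finset.univ.image s ∈ truncatedPP P L w)
    (F : Fin r → Finset {p : P // p ≠ w})
    (hF : ∀ i, F i ∈ truncatedPP P L w)
    (hSF : ∀ i, Finset.univ.image s ∩ F i = {s i})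
    (H' : Set (Finset ({p : P // p ≠ w} ⊕ Fin r)))
    (hsub : H' ⊆ constructionH (truncatedPP P L w) (Finset.univ.image s) s F)
    (hτ : coverNumber H' = r) :
    ∀ i : Fin r, (F i).image Sum.inl ∈ H' ∧ hatE ((F i).erase (s i)) i ∈ H' := by
  obtain ⟨hminj, hwm, -⟩ := hm
  obtain ⟨ℓS, hwS, hSeq⟩ := hS
  choose ℓF hwF hFeq using hF
  have hmem : ∀ (ℓ : L) (p : {p : P // p ≠ w}), p ∈ linePoints w ℓ ↔ (p : P) ∈ ℓ := by
    intro ℓ p; simp [linePoints]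
  have hsS : ∀ i, s i ∈ Finset.univ.image s :=
    fun i => Finset.mem_image_of_mem s (Finset.mem_univ i)
  have hsℓS : ∀ i, (s i : P) ∈ ℓS := by
    intro i
    have h := hsS i
    rw [hSeq, hmem] at h
    exact h
  have s_inj : Function.Injective s := by
    intro i i' h
    by_contra hne
    have h2 : (s i : P) ∈ m i' := h ▸ hside i'
    rcases Configuration.Nondegenerate.eq_or_eq (hside i) (hwm i) h2 (hwm i') with h3 | h3
    · exact (s i).2 h3
    · exact hne (hminj h3)
  intro j
  have s_not_mj : ∀ i, i ≠ j → (s i : P) ∉ m j := by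
    intro i hij hmem'
    rcases Configuration.Nondegenerate.eq_or_eq (hside i) (hwm i) hmem' (hwm j) with h3 | h3
    · exact (s i).2 h3
    · exact hij (hminj h3)
  have hkey : ∀ ℓ : L, w ∉ ℓ → ∃ p : {p : P // p ≠ w}, (p : P) ∈ ℓ ∧ (p : P) ∈ m j := by
    intro ℓ hwℓ
    have hne : ℓ ≠ m j := fun h => hwℓ (h ▸ hwm j)
    obtain ⟨h1, h2⟩ := Configuration.HasPoints.mkPoint_ax (P := P) hne
    exact ⟨⟨Configuration.HasPoints.mkPoint (P := P) hne, fun h => hwℓ (h ▸ h1)⟩, h1, h2⟩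
  have hfiltercard : (Finset.univ.filter (fun p : P => p ∈ m j)).card = r := by
    have h1 : Configuration.pointCount P (m j) = r := by
      rw [Configuration.ProjectivePlane.pointCount_eq, horder]; omega
    rw [← h1, Configuration.pointCount, Nat.card_eq_fintype_card, Fintype.card_subtype]
  have hcardmj : (linePoints w (m j)).card ≤ r - 1 := by
    have hsub2 : ∀ p ∈ linePoints w (m j),
        (p : P) ∈ (Finset.univ.filter (fun p : P => p ∈ m j)).erase w := by
      intro p hp
      rw [hmem] at hp
      rw [Finset.mem_erase, Finset.mem_filter]
      exact ⟨p.2, Finset.mem_univ _, hp⟩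
    have h := Finset.card_le_card_of_injOn
      (f := fun p : {p : P // p ≠ w} => (p : P)) hsub2
      (fun a _ b _ hab => Subtype.ext hab)
    have hwf : w ∈ Finset.univ.filter (fun p : P => p ∈ m j) := by
      rw [Finset.mem_filter]; exact ⟨Finset.mem_univ _, hwm j⟩
    rwa [Finset.card_erase_of_mem hwf, hfiltercard] at h
  have hpsj_of : ∀ i, i ≠ j → ∀ p : {p : P // p ≠ w}, p ∈ F i → p ≠ s j := by
    intro i hij p hpF h
    have h2 : s j ∈ Finset.univ.image s ∩ F i := by
      rw [Finset.mem_inter]; exact ⟨hsS j, h ▸ hpF⟩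
    rw [hSF i, Finset.mem_singleton] at h2
    exact hij (s_inj h2).symm
  constructor
  · -- F j must be present
    by_contra hFj
    set C : Finset ({p : P // p ≠ w} ⊕ Fin r) :=
      insert (Sum.inr j) (((linePoints w (m j)).erase (s j)).image Sum.inl) with hC
    have hC2 : ∀ p : {p : P // p ≠ w}, (p : P) ∈ m j → p ≠ s j → Sum.inl p ∈ (↑C : Set ({p : P // p ≠ w} ⊕ Fin r)) := by
      intro p hp hps
      rw [hC]
      simp only [Finset.coe_insert, Set.mem_insert_iff, Finset.mem_coe, Finset.mem_image,
        Finset.mem_erase]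
      exact Or.inr ⟨p, ⟨hps, (hmem _ _).mpr hp⟩, rfl⟩
    have hC1 : Sum.inr j ∈ (C : Set ({p : P // p ≠ w} ⊕ Fin r)) := by
      rw [hC]
      simp only [Finset.coe_insert, Set.mem_insert_iff]
      exact Or.inl trivial
    have hcov : IsCover (↑C) H' := by
      intro Eh hEh
      rcases hsub hEh with ((⟨E, hET, hES, i, hsiE, rfl⟩ | ⟨i, rfl⟩) | ⟨i, rfl⟩)
      · obtain ⟨ℓ, hwℓ, rfl⟩ := hET
        by_cases hij : i = j
        · subst hij
          refine ⟨Sum.inr i, hC1, ?_⟩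
          simp only [hatE, Finset.mem_insert]
          exact Or.inl trivial
        · obtain ⟨p, hp1, hp2⟩ := hkey ℓ hwℓ
          have hpsj : p ≠ s j := by
            intro h
            have hsjℓ : (s j : P) ∈ ℓ := by rw [← h]; exact hp1
            have hsiℓ : (s i : P) ∈ ℓ := (hmem ℓ (s i)).mp hsiE
            have hℓne : ℓ ≠ ℓS := by
              intro he; exact hES (by rw [hSeq, he])
            rcases Configuration.Nondegenerate.eq_or_eq hsjℓ hsiℓ (hsℓS j) (hsℓS i)
              with h3 | h3
            · exact hij (s_inj (Subtype.ext h3)).symm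
            · exact hℓne h3
          refine ⟨Sum.inl p, hC2 p hp2 hpsj, ?_⟩
          simp only [hatE, Finset.mem_insert, Finset.mem_image]
          exact Or.inr ⟨p, (hmem _ _).mpr hp1, rfl⟩
      · by_cases hij : i = j
        · subst hij
          exact absurd (by convert hEh using 2) hFj
        · obtain ⟨p, hp1, hp2⟩ := hkey (ℓF i) (hwF i)
          have hpF : p ∈ F i := by rw [hFeq i, hmem]; exact hp1
          refine ⟨Sum.inl p, hC2 p hp2 (hpsj_of i hij p hpF), ?_⟩
          simp only [Finset.mem_image]
          exact ⟨p, hpF, rfl⟩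
      · by_cases hij : i = j
        · subst hij
          refine ⟨Sum.inr i, hC1, ?_⟩
          simp only [hatE, Finset.mem_insert]
          exact Or.inl trivial
        · obtain ⟨p, hp1, hp2⟩ := hkey (ℓF i) (hwF i)
          have hpF : p ∈ F i := by rw [hFeq i, hmem]; exact hp1
          have hpsi : p ≠ s i := by
            intro h
            exact s_not_mj i hij (h ▸ hp2)
          refine ⟨Sum.inl p, hC2 p hp2 (hpsj_of i hij p hpF), ?_⟩
          simp only [hatE, Finset.mem_insert, Finset.mem_image, Finset.mem_erase]
          exact Or.inr ⟨p, ⟨hpsi, hpF⟩, rfl⟩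
    have hcard : C.card ≤ r - 1 := by
      have hsjlp : s j ∈ linePoints w (m j) := (hmem _ _).mpr (hside j)
      rw [hC]
      refine le_trans (Finset.card_insert_le _ _)
        (le_trans (Nat.add_le_add_right Finset.card_image_le 1) ?_)
      rw [Finset.card_erase_of_mem hsjlp]
      omega
    have hle : coverNumber H' ≤ C.card := Nat.sInf_le ⟨C, hcov, rfl⟩
    omega
  · -- the E3 edge for j must be present
    by_contra hE3
    set C : Finset ({p : P // p ≠ w} ⊕ Fin r) := (linePoints w (m j)).image Sum.inl with hC
    have hC2 : ∀ p : {p : P // p ≠ w}, (p : P) ∈ m j → Sum.inl p ∈ (↑C : Set ({p : P // p ≠ w} ⊕ Fin r)) := by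
      intro p hp
      rw [hC]
      simp only [Finset.coe_image, Set.mem_image, Finset.mem_coe]
      exact ⟨p, (hmem _ _).mpr hp, rfl⟩
    have hcov : IsCover (↑C) H' := by
      intro Eh hEh
      rcases hsub hEh with ((⟨E, hET, hES, i, hsiE, rfl⟩ | ⟨i, rfl⟩) | ⟨i, rfl⟩)
      · obtain ⟨ℓ, hwℓ, rfl⟩ := hET
        obtain ⟨p, hp1, hp2⟩ := hkey ℓ hwℓ
        refine ⟨Sum.inl p, hC2 p hp2, ?_⟩
        simp only [hatE, Finset.mem_insert, Finset.mem_image]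
        exact Or.inr ⟨p, (hmem _ _).mpr hp1, rfl⟩
      · obtain ⟨p, hp1, hp2⟩ := hkey (ℓF i) (hwF i)
        have hpF : p ∈ F i := by rw [hFeq i, hmem]; exact hp1
        refine ⟨Sum.inl p, hC2 p hp2, ?_⟩
        simp only [Finset.mem_image]
        exact ⟨p, hpF, rfl⟩
      · by_cases hij : i = j
        · subst hij
          refine absurd ?_ hE3
          convert hEh using 2
          ext x
          simp [hatE, Finset.mem_insert, Finset.mem_image, Finset.mem_erase]
        · obtain ⟨p, hp1, hp2⟩ := hkey (ℓF i) (hwF i)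
          have hpF : p ∈ F i := by rw [hFeq i, hmem]; exact hp1
          have hpsi : p ≠ s i := by
            intro h
            exact s_not_mj i hij (h ▸ hp2)
          refine ⟨Sum.inl p, hC2 p hp2, ?_⟩
          simp only [hatE, Finset.mem_insert, Finset.mem_image, Finset.mem_erase]
          exact Or.inr ⟨p, ⟨hpsi, hpF⟩, rfl⟩
    have hcard : C.card ≤ r - 1 := le_trans Finset.card_image_le hcardmj
    have hle : coverNumber H' ≤ C.card := Nat.sInf_le ⟨C, hcov, rfl⟩
    omega

end
end
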